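/- arXiv:1411.6401 — 11 statements merged into one kernel-verified Lean document; each statement's English description precedes it below -/
import Mathlib

section
/- Let A be an abelian group with |A| ≥ 3. For every n ≥ 5, the complete graph Kₙ is A-connected. -/
open Finset

/-- A graph `G` is `A`-connected: for every `b : V → A` summing to zero, there is an
antisymmetric map `f : V → V → A` that is nonzero exactly on (ordered) edges of `G`
(this encodes an orientation together with a map `E(G) → A \ {0}`) whose boundary
`∂f(v) = ∑ u, f v u` equals `b v` at every vertex. -/
def SimpleGraph.AConnected {V : Type} [Fintype V] (G : SimpleGraph V)
    (A : Type) [AddCommGroup A] : Prop :=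
  ∀ b : V → A, ∑ v, b v = 0 →
    ∃ f : V → V → A,
      (∀ u v, f u v = - f v u) ∧
      (∀ u v, G.Adj u v ↔ f u v ≠ 0) ∧
      (∀ v, ∑ u, f v u = b v)

section Aux
variable {A : Type} [AddCommGroup A] (a w e δ : A) (g : ℕ → A)

/-- Table of values on edges `u < v` of the inner complete graph on `{1,…,n-1}`. -/
def Ptab (u v : ℕ) : A :=
  if u = 1 ∧ v = 2 then δ
  else if u = 1 ∧ v = 3 then -δ
  else if u = 2 ∧ v = 3 then e + δ
  else if u = 1 ∧ v = 4 then w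
  else if u = 2 ∧ 4 ≤ v then g v
  else a

/-- Antisymmetrized inner matrix, zero on row/column 0 and diagonal. -/
def ytab (u v : ℕ) : A :=
  if u = 0 ∨ v = 0 ∨ u = v then 0
  else if u < v then Ptab a w e δ g u v else - Ptab a w e δ g v u

variable {a w e δ g}

lemma ytab_anti (u v : ℕ) : ytab a w e δ g u v = - ytab a w e δ g v u := by
  unfold ytab
  by_cases h0 : u = 0 ∨ v = 0 ∨ u = v
  · rw [if_pos h0, if_pos (by omega), neg_zero]
  · rcases Nat.lt_trichotomy u v with h | h | h
    · rw [if_neg h0, if_pos h, if_neg (by omega), if_neg (by omega), neg_neg]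
    · omega
    · rw [if_neg h0, if_neg (by omega), if_neg (by omega), if_pos h]

lemma ytab_u0 (u : ℕ) : ytab a w e δ g u 0 = 0 := by
  unfold ytab; rw [if_pos (by omega)]

lemma ytab_0v (v : ℕ) : ytab a w e δ g 0 v = 0 := by
  unfold ytab; rw [if_pos (by omega)]

lemma ytab_diag (u : ℕ) : ytab a w e δ g u u = 0 := by
  unfold ytab; rw [if_pos (by omega)]

lemma ytab_12 : ytab a w e δ g 1 2 = δ := by
  unfold ytab Ptab
  rw [if_neg (by omega), if_pos (by omega), if_pos (by omega)]

lemma ytab_13 : ytab a w e δ g 1 3 = -δ := by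
  unfold ytab Ptab
  rw [if_neg (by omega), if_pos (by omega), if_neg (by omega), if_pos (by omega)]

lemma ytab_23 : ytab a w e δ g 2 3 = e + δ := by
  unfold ytab Ptab
  rw [if_neg (by omega), if_pos (by omega), if_neg (by omega), if_neg (by omega),
    if_pos (by omega)]

lemma ytab_14 : ytab a w e δ g 1 4 = w := by
  unfold ytab Ptab
  rw [if_neg (by omega), if_pos (by omega), if_neg (by omega), if_neg (by omega),
    if_neg (by omega), if_pos (by omega)]

lemma ytab_1r {v : ℕ} (hv : 5 ≤ v) : ytab a w e δ g 1 v = a := by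
  unfold ytab Ptab
  rw [if_neg (by omega), if_pos (by omega), if_neg (by omega), if_neg (by omega),
    if_neg (by omega), if_neg (by omega), if_neg (by omega)]

lemma ytab_1r' {v : ℕ} (hv : 4 ≤ v) : ytab a w e δ g 1 v = if v = 4 then w else a := by
  by_cases h : v = 4
  · subst h; rw [if_pos rfl]; exact ytab_14
  · rw [if_neg h]; exact ytab_1r (by omega)

lemma ytab_2r {v : ℕ} (hv : 4 ≤ v) : ytab a w e δ g 2 v = g v := by
  unfold ytab Ptab
  rw [if_neg (by omega), if_pos (by omega), if_neg (by omega), if_neg (by omega),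
    if_neg (by omega), if_neg (by omega), if_pos (by omega)]

lemma ytab_3r {v : ℕ} (hv : 4 ≤ v) : ytab a w e δ g 3 v = a := by
  unfold ytab Ptab
  rw [if_neg (by omega), if_pos (by omega), if_neg (by omega), if_neg (by omega),
    if_neg (by omega), if_neg (by omega), if_neg (by omega)]

lemma ytab_rr' {u v : ℕ} (hu : 4 ≤ u) (huv : u < v) : ytab a w e δ g u v = a := by
  unfold ytab Ptab
  rw [if_neg (by omega), if_pos (by omega), if_neg (by omega), if_neg (by omega),
    if_neg (by omega), if_neg (by omega), if_neg (by omega)]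

lemma Ptab_ne (ha : a ≠ 0) (hw : w ≠ 0) (hδ : δ ≠ 0) (hδe : δ ≠ -e)
    (hg : ∀ r, g r ≠ 0) (u v : ℕ) : Ptab a w e δ g u v ≠ 0 := by
  have heδ : e + δ ≠ 0 := fun h => hδe (eq_neg_of_add_eq_zero_right h)
  unfold Ptab
  split_ifs <;> simp_all

lemma ytab_ne (ha : a ≠ 0) (hw : w ≠ 0) (hδ : δ ≠ 0) (hδe : δ ≠ -e)
    (hg : ∀ r, g r ≠ 0) {u v : ℕ} (hu : u ≠ 0) (hv : v ≠ 0) (huv : u ≠ v) :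
    ytab a w e δ g u v ≠ 0 := by
  unfold ytab
  rw [if_neg (by omega)]
  rcases Nat.lt_trichotomy u v with h | h | h
  · rw [if_pos h]; exact Ptab_ne ha hw hδ hδe hg u v
  · omega
  · rw [if_neg (by omega)]; exact neg_ne_zero.mpr (Ptab_ne ha hw hδ hδe hg v u)

end Aux

section Rows
variable {A : Type} [AddCommGroup A] {a w e δ : A} {g : ℕ → A} {n : ℕ}

lemma rowsum1 (hn : 5 ≤ n) :
    ∑ i ∈ range n, ytab a w e δ g 1 i = w + (n - 5) • a := by
  rw [range_eq_Ico, ← Finset.sum_Ico_consecutive _ (Nat.zero_le 5) hn]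
  have hA : ∑ i ∈ Ico 0 5, ytab a w e δ g 1 i = w := by
    rw [← range_eq_Ico, Finset.sum_range_succ, Finset.sum_range_succ, Finset.sum_range_succ,
      Finset.sum_range_succ, Finset.sum_range_one, ytab_u0, ytab_diag, ytab_12, ytab_13, ytab_14]
    abel
  have hB : ∑ i ∈ Ico 5 n, ytab a w e δ g 1 i = (n - 5) • a := by
    rw [Finset.sum_congr rfl (fun i hi => ytab_1r (Finset.mem_Ico.mp hi).1),
      Finset.sum_const, Nat.card_Ico]
  rw [hA, hB]

lemma rowsum2 (hn : 5 ≤ n) :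
    ∑ i ∈ range n, ytab a w e δ g 2 i = e + ∑ i ∈ Ico 4 n, g i := by
  rw [range_eq_Ico, ← Finset.sum_Ico_consecutive _ (Nat.zero_le 4) (by omega : 4 ≤ n)]
  have hA : ∑ i ∈ Ico 0 4, ytab a w e δ g 2 i = e := by
    rw [← range_eq_Ico, Finset.sum_range_succ, Finset.sum_range_succ, Finset.sum_range_succ,
      Finset.sum_range_one, ytab_u0, ytab_diag, ytab_23, ytab_anti 2 1, ytab_12]
    abel
  have hB : ∑ i ∈ Ico 4 n, ytab a w e δ g 2 i = ∑ i ∈ Ico 4 n, g i :=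
    Finset.sum_congr rfl (fun i hi => ytab_2r (Finset.mem_Ico.mp hi).1)
  rw [hA, hB]

lemma rowsum3 (hn : 5 ≤ n) :
    ∑ i ∈ range n, ytab a w e δ g 3 i = -e + (n - 4) • a := by
  rw [range_eq_Ico, ← Finset.sum_Ico_consecutive _ (Nat.zero_le 4) (by omega : 4 ≤ n)]
  have hA : ∑ i ∈ Ico 0 4, ytab a w e δ g 3 i = -e := by
    rw [← range_eq_Ico, Finset.sum_range_succ, Finset.sum_range_succ, Finset.sum_range_succ,
      Finset.sum_range_one, ytab_u0, ytab_diag, ytab_anti 3 1, ytab_13, ytab_anti 3 2, ytab_23]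
    abel
  have hB : ∑ i ∈ Ico 4 n, ytab a w e δ g 3 i = (n - 4) • a := by
    rw [Finset.sum_congr rfl (fun i hi => ytab_3r (Finset.mem_Ico.mp hi).1),
      Finset.sum_const, Nat.card_Ico]
  rw [hA, hB]

lemma rowsumr (hn : 5 ≤ n) {r : ℕ} (hr : 4 ≤ r) (hrn : r < n) :
    ∑ i ∈ range n, ytab a w e δ g r i =
      ((n - (r + 1)) • a - (r - 4) • a - a - g r) - (if r = 4 then w else a) := by
  rw [range_eq_Ico, ← Finset.sum_Ico_consecutive _ (Nat.zero_le 4) (by omega : 4 ≤ n),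
    ← Finset.sum_Ico_consecutive _ hr (by omega : r ≤ n),
    Finset.sum_eq_sum_Ico_succ_bot hrn]
  have hA : ∑ i ∈ Ico 0 4, ytab a w e δ g r i =
      -(if r = 4 then w else a) + (- g r) + (- a) := by
    rw [← range_eq_Ico, Finset.sum_range_succ, Finset.sum_range_succ, Finset.sum_range_succ,
      Finset.sum_range_one, ytab_u0, ytab_anti r 1, ytab_1r' hr, ytab_anti r 2, ytab_2r hr,
      ytab_anti r 3, ytab_3r hr]
    abel
  have hB : ∑ i ∈ Ico 4 r, ytab a w e δ g r i = -((r - 4) • a) := by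
    rw [Finset.sum_congr rfl
        (fun i hi => by
          rw [ytab_anti r i, ytab_rr' (Finset.mem_Ico.mp hi).1 (Finset.mem_Ico.mp hi).2]),
      Finset.sum_const, Nat.card_Ico, neg_nsmul]
  have hC : ∑ i ∈ Ico (r + 1) n, ytab a w e δ g r i = (n - (r + 1)) • a := by
    rw [Finset.sum_congr rfl
        (fun i hi => ytab_rr' hr (Finset.mem_Ico.mp hi).1), Finset.sum_const, Nat.card_Ico]
  rw [hA, hB, ytab_diag, hC]
  abel

lemma rowsum0 : ∑ i ∈ range n, ytab a w e δ g 0 i = 0 := by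
  rw [Finset.sum_congr rfl (fun i _ => ytab_0v i), Finset.sum_const, smul_zero]

end Rows


open Finset

lemma sum_sum_eq_zero_of_anti {A : Type} [AddCommGroup A] {ι : Type} [Fintype ι]
    [DecidableEq ι] (m : ι → ι → A) (hanti : ∀ u v, m u v = - m v u)
    (hdiag : ∀ u, m u u = 0) : ∑ u, ∑ v, m u v = 0 := by
  rw [← Finset.sum_product']
  refine Finset.sum_ninvolution (fun p => (p.2, p.1)) ?_ ?_ ?_ ?_
  · intro p; rw [hanti p.1 p.2]; abel
  · intro p hp heq
    apply hp
    have h1 : p.2 = p.1 := congrArg Prod.fst heq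
    calc m p.1 p.2 = m p.2 p.2 := by rw [h1]
    _ = 0 := hdiag p.2
  · intro _; exact Finset.mem_univ _
  · intro p; rfl

lemma exists_avoid {A : Type} [AddCommGroup A] (hA : 3 ≤ Cardinal.mk A) (p q : A) :
    ∃ x : A, x ≠ p ∧ x ≠ q := by
  by_contra h
  push_neg at h
  have hsub : (Set.univ : Set A) ⊆ {p, q} := by
    intro x _
    rcases eq_or_ne x p with h1 | h1
    · exact Or.inl h1
    · exact Or.inr (h x h1)
  have h2 : Cardinal.mk A ≤ 2 := by
    calc Cardinal.mk A = Cardinal.mk (Set.univ : Set A) := Cardinal.mk_univ.symm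
    _ ≤ Cardinal.mk ({p, q} : Set A) := Cardinal.mk_le_mk_of_subset hsub
    _ ≤ 2 := by
      have := Cardinal.mk_insert_le (s := ({q} : Set A)) (a := p)
      rw [Cardinal.mk_singleton] at this
      exact this.trans (by norm_num)
  have : (3 : Cardinal) ≤ 2 := hA.trans h2
  norm_num at this


theorem stmt_3 (A : Type) [AddCommGroup A] (hA : 3 ≤ Cardinal.mk A)
    (n : ℕ) (hn : 5 ≤ n) :
    (⊤ : SimpleGraph (Fin n)).AConnected A := by
  intro b hb
  have hn0 : 0 < n := by omega
  set b' : ℕ → A := fun r => if h : r < n then b ⟨r, h⟩ else 0 with hb'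
  have hbv : ∀ v : Fin n, b' v.val = b v := by
    intro v
    simp only [hb', v.isLt, dif_pos, Fin.eta]
  obtain ⟨a, ha0, -⟩ := exists_avoid hA 0 0
  obtain ⟨w, hw0, hw1⟩ := exists_avoid hA 0 (b' 1 - (n - 5) • a)
  have hgch : ∀ r : ℕ, ∃ x : A, x ≠ 0 ∧
      x ≠ ((n - (r + 1)) • a - (r - 4) • a - a - (if r = 4 then w else a) - b' r) :=
    fun r => exists_avoid hA 0 _
  choose g hg0 hgc using hgch
  obtain ⟨e, he2, he3⟩ :=
    exists_avoid hA (b' 2 - ∑ i ∈ Finset.Ico 4 n, g i) ((n - 4) • a - b' 3)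
  obtain ⟨δ, hδ0, hδe⟩ := exists_avoid hA 0 (-e)
  set t : Fin n → A :=
    fun v => b v - ∑ i ∈ Finset.range n, ytab a w e δ g v.val i with ht
  have htv : ∀ v : Fin n, t v = b v - ∑ i ∈ Finset.range n, ytab a w e δ g v.val i :=
    fun _ => rfl
  have hsv : ∀ v : Fin n, ∑ u : Fin n, ytab a w e δ g v.val u.val
      = ∑ i ∈ Finset.range n, ytab a w e δ g v.val i :=
    fun v => Fin.sum_univ_eq_sum_range _ n
  -- key: inner row sums avoid b
  have hrow : ∀ v : Fin n, v.val ≠ 0 →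
      ∑ i ∈ Finset.range n, ytab a w e δ g v.val i ≠ b v := by
    intro v hv
    by_cases h1 : v.val = 1
    · rw [h1, rowsum1 hn]
      intro h
      exact hw1 (by rw [eq_sub_of_add_eq h, ← hbv v, h1])
    · by_cases h2 : v.val = 2
      · rw [h2, rowsum2 hn]
        intro h
        exact he2 (by rw [eq_sub_of_add_eq h, ← hbv v, h2])
      · by_cases h3 : v.val = 3
        · rw [h3, rowsum3 hn]
          intro h
          have h' : e = -(b v - (n - 4) • a) :=
            neg_eq_iff_eq_neg.mp (eq_sub_of_add_eq h)
          apply he3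
          have hb3 : b' 3 = b v := by rw [← h3]; exact hbv v
          rw [hb3, h', neg_sub]
        · have h4 : 4 ≤ v.val := by omega
          rw [rowsumr hn h4 v.isLt]
          intro h
          apply hgc v.val
          rw [hbv v, ← h]
          abel
  have htne : ∀ v : Fin n, v.val ≠ 0 → t v ≠ 0 := by
    intro v hv
    rw [htv v]
    exact sub_ne_zero_of_ne (Ne.symm (hrow v hv))
  set f : Fin n → Fin n → A := fun u v => ytab a w e δ g u.val v.val +
    ((if v.val = 0 then t u else 0) - (if u.val = 0 then t v else 0)) with hfdef
  have hf : ∀ u v : Fin n, f u v = ytab a w e δ g u.val v.val +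
      ((if v.val = 0 then t u else 0) - (if u.val = 0 then t v else 0)) :=
    fun _ _ => rfl
  refine ⟨f, ?_, ?_, ?_⟩
  · intro u v
    rw [hf, hf, ytab_anti u.val v.val]
    abel
  · intro u v
    rw [SimpleGraph.top_adj]
    constructor
    · intro huv
      have hvalne : u.val ≠ v.val := fun h => huv (Fin.ext h)
      rw [hf]
      by_cases hu0 : u.val = 0
      · have hv0 : v.val ≠ 0 := by omega
        rw [if_pos hu0, if_neg hv0, hu0, ytab_0v, zero_add, zero_sub, neg_ne_zero]
        exact htne v hv0
      · by_cases hv0 : v.val = 0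
        · rw [if_pos hv0, if_neg hu0, hv0, ytab_u0, zero_add, sub_zero]
          exact htne u hu0
        · rw [if_neg hu0, if_neg hv0, sub_zero, add_zero]
          exact ytab_ne ha0 hw0 hδ0 hδe hg0 hu0 hv0 hvalne
    · intro hne heq
      apply hne
      subst heq
      rw [hf, ytab_diag, zero_add, sub_self]
  · intro v
    have expand : ∑ u : Fin n, f v u =
        (∑ u : Fin n, ytab a w e δ g v.val u.val) +
          ((∑ u : Fin n, if u.val = 0 then t v else 0)
            - ∑ u : Fin n, if v.val = 0 then t u else 0) := by
      rw [Finset.sum_congr rfl (fun u _ => hf v u), Finset.sum_add_distrib,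
        Finset.sum_sub_distrib]
    rw [expand]
    have hind : (∑ u : Fin n, if u.val = 0 then t v else 0) = t v := by
      rw [Finset.sum_congr rfl (fun u _ => if_congr
        (show (u.val = 0) ↔ (u = ⟨0, hn0⟩) from by rw [Fin.ext_iff]) rfl rfl)]
      rw [Finset.sum_ite_eq' Finset.univ (⟨0, hn0⟩ : Fin n) (fun _ => t v)]
      simp
    rw [hind, hsv]
    by_cases hv0 : v.val = 0
    · have hts : ∑ u : Fin n, t u = 0 := by
        have hss : ∑ u : Fin n, ∑ i ∈ Finset.range n, ytab a w e δ g u.val i = 0 := by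
          have h0 := sum_sum_eq_zero_of_anti (fun (u u' : Fin n) => ytab a w e δ g u.val u'.val)
            (fun u u' => ytab_anti u.val u'.val) (fun u => ytab_diag u.val)
          rw [Finset.sum_congr rfl (fun u _ => (hsv u))] at h0
          exact h0
        rw [Finset.sum_congr rfl (fun u _ => htv u), Finset.sum_sub_distrib, hb, hss, sub_zero]
      have hrs0 : ∑ i ∈ Finset.range n, ytab a w e δ g v.val i = 0 := by
        rw [hv0]; exact rowsum0
      have hsum_ite : (∑ u : Fin n, if v.val = 0 then t u else 0) = ∑ u : Fin n, t u :=
        Finset.sum_congr rfl (fun u _ => if_pos hv0)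
      rw [hrs0, hsum_ite, hts, htv v, hrs0, sub_zero, zero_add, sub_zero]
    · have hz : (∑ u : Fin n, if v.val = 0 then t u else 0) = 0 := by
        rw [Finset.sum_congr rfl (fun u _ => if_neg hv0), Finset.sum_const_zero]
      rw [hz, sub_zero, htv v]
      abel
end

section
/- Let A be an abelian group with |A| ≥ 3. For every n ≥ 5, the graph Kₙ⁻ obtained from the complete graph Kₙ by deleting one edge is A-connected. -/
open Finset

set_option maxHeartbeats 3200000 in
private theorem kcore {V : Type} [Fintype V] [LinearOrder V]
    {A : Type} [AddCommGroup A]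
    (hA : ∀ a b : A, ∃ c : A, c ≠ a ∧ c ≠ b)
    (v0 v1 v2 v3 v4 : V)
    (h01 : v0 ≠ v1) (h02 : v0 ≠ v2) (h03 : v0 ≠ v3) (h04 : v0 < v4)
    (h12 : v1 ≠ v2) (h13 : v1 ≠ v3) (h14 : v1 < v4)
    (h23 : v2 ≠ v3) (h24 : v2 ≠ v4) (h34 : v3 ≠ v4)
    (b : V → A) (hb : ∑ v, b v = 0) :
    ∃ f : V → V → A,
      (∀ u v, f u v = - f v u) ∧
      (∀ u v, (u ≠ v ∧ ¬((u = v0 ∧ v = v1) ∨ (u = v1 ∧ v = v0))) ↔ f u v ≠ 0) ∧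
      (∀ v, ∑ u, f v u = b v) := by
  classical
  obtain ⟨t, ht0, -⟩ := hA 0 0
  set W : Finset V := (univ.erase v3).erase v2 with hWdef
  have hmW : ∀ v : V, v ∈ W ↔ v ≠ v2 ∧ v ≠ v3 := by
    intro v; simp [hWdef, mem_erase]
  have hsplit : ∀ g : V → A, ∑ u, g u = g v3 + (g v2 + ∑ u ∈ W, g u) := by
    intro g
    rw [← Finset.add_sum_erase _ g (mem_univ v3),
      ← Finset.add_sum_erase _ g (mem_erase.2 ⟨h23, mem_univ v2⟩), ← hWdef]
  have h0W : v0 ∈ W := (hmW v0).2 ⟨h02, h03⟩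
  have h1W : v1 ∈ W := (hmW v1).2 ⟨h12, h13⟩
  have h4W : v4 ∈ W := (hmW v4).2 ⟨h24.symm, h34.symm⟩
  set W' : Finset V := ((W.erase v0).erase v1).erase v4 with hW'def
  have hmW' : ∀ v : V, v ∈ W' ↔ v ≠ v0 ∧ v ≠ v1 ∧ v ≠ v2 ∧ v ≠ v3 ∧ v ≠ v4 := by
    intro v; simp only [hW'def, mem_erase, hmW]; tauto
  have hsplitW : ∀ g : V → A,
      ∑ u ∈ W, g u = g v0 + (g v1 + (g v4 + ∑ u ∈ W', g u)) := by
    intro g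
    rw [← Finset.add_sum_erase _ g h0W,
      ← Finset.add_sum_erase _ g (mem_erase.2 ⟨h01.symm, h1W⟩),
      ← Finset.add_sum_erase _ g
        (mem_erase.2 ⟨(ne_of_gt h14), mem_erase.2 ⟨(ne_of_gt h04), h4W⟩⟩), ← hW'def]
  set R4 : A := ∑ u ∈ W', (if v4 < u then t else -t) with hR4def
  obtain ⟨u₁, hu10, hu1c⟩ := hA 0 (R4 - b v4)
  set u₂ : A := R4 - b v4 - u₁ with hu2def
  have hu20 : u₂ ≠ 0 := sub_ne_zero.mpr (Ne.symm hu1c)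
  set val : V → V → A := fun u v =>
    if (u = v0 ∧ v = v4) ∨ (u = v4 ∧ v = v0) then u₁
    else if (u = v1 ∧ v = v4) ∨ (u = v4 ∧ v = v1) then u₂ else t with hvaldef
  have hvalne : ∀ u v, val u v ≠ 0 := by
    intro u v; simp only [hvaldef]; split_ifs <;> assumption
  have hvalsymm : ∀ u v, val u v = val v u := by
    intro u v
    have e1 : ((u = v0 ∧ v = v4) ∨ (u = v4 ∧ v = v0)) ↔
        ((v = v0 ∧ u = v4) ∨ (v = v4 ∧ u = v0)) := by tauto
    have e2 : ((u = v1 ∧ v = v4) ∨ (u = v4 ∧ v = v1)) ↔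
        ((v = v1 ∧ u = v4) ∨ (v = v4 ∧ u = v1)) := by tauto
    simp only [hvaldef, e1, e2]
  set Eg : V → V → Prop := fun u v => u ≠ v2 ∧ u ≠ v3 ∧ v ≠ v2 ∧ v ≠ v3 ∧ u ≠ v ∧
      ¬((u = v0 ∧ v = v1) ∨ (u = v1 ∧ v = v0)) with hEgdef
  have hEgsymm : ∀ u v, Eg u v → Eg v u := by
    intro u v h
    obtain ⟨a1, a2, a3, a4, a5, a6⟩ := h
    exact ⟨a3, a4, a1, a2, a5.symm, by tauto⟩
  set d : V → V → A := fun u v =>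
    if Eg u v then (if u < v then val u v else - val u v) else 0 with hddef
  have hdnotE : ∀ u v, ¬ Eg u v → d u v = 0 := by
    intro u v h; simp only [hddef]; rw [if_neg h]
  have hdsymm : ∀ u v, d u v = - d v u := by
    intro u v
    by_cases h : Eg u v
    · have h' : Eg v u := hEgsymm u v h
      simp only [hddef]
      rw [if_pos h, if_pos h']
      have hne : u ≠ v := h.2.2.2.2.1
      rcases lt_or_gt_of_ne hne with hlt | hgt
      · rw [if_pos hlt, if_neg (not_lt.2 hlt.le), neg_neg, hvalsymm]
      · rw [if_neg (not_lt.2 hgt.le), if_pos hgt, hvalsymm]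
    · rw [hdnotE u v h, hdnotE v u (fun h' => h (hEgsymm v u h')), neg_zero]
  have hdne : ∀ u v, Eg u v → d u v ≠ 0 := by
    intro u v h
    simp only [hddef]; rw [if_pos h]
    split_ifs
    · exact hvalne u v
    · exact neg_ne_zero.2 (hvalne u v)
  set S : V → A := fun v => ∑ u, d v u with hSdef
  have hS2 : S v2 = 0 := Finset.sum_eq_zero fun u _ => hdnotE _ _ (fun h => h.1 rfl)
  have hS3 : S v3 = 0 := Finset.sum_eq_zero fun u _ => hdnotE _ _ (fun h => h.2.1 rfl)
  have hStot : ∑ v, S v = 0 := by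
    simp only [hSdef]
    rw [← Finset.sum_product']
    refine Finset.sum_involution (fun p _ => (p.2, p.1)) ?_ ?_ ?_ ?_
    · intro p _
      rw [hdsymm]
      exact neg_add_cancel _
    · intro p _ hfp heq
      have h12 : p.2 = p.1 := congrArg Prod.fst heq
      exact hfp (hdnotE _ _ (fun h => h.2.2.2.2.1 h12.symm))
    · intro p _; exact mem_univ _
    · intro p _; rfl
  have hSv4 : S v4 = b v4 := by
    have e0 : d v4 v0 = -u₁ := by
      have hE : Eg v4 v0 := by
        refine ⟨h24.symm, h34.symm, h02, h03, (ne_of_gt h04), ?_⟩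
        rintro (⟨h, -⟩ | ⟨h, -⟩)
        · exact (ne_of_gt h04) h
        · exact (ne_of_gt h14) h
      have hv : val v4 v0 = u₁ := by simp [hvaldef]
      simp only [hddef]
      rw [if_pos hE, if_neg (not_lt.2 h04.le), hv]
    have e1 : d v4 v1 = -u₂ := by
      have hE : Eg v4 v1 := by
        refine ⟨h24.symm, h34.symm, h12, h13, (ne_of_gt h14), ?_⟩
        rintro (⟨h, -⟩ | ⟨h, -⟩)
        · exact (ne_of_gt h04) h
        · exact (ne_of_gt h14) h
      have hv : val v4 v1 = u₂ := by
        simp [hvaldef, ne_of_gt h04, Ne.symm h01]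
      simp only [hddef]
      rw [if_pos hE, if_neg (not_lt.2 h14.le), hv]
    have e4 : d v4 v4 = 0 := hdnotE _ _ (fun h => h.2.2.2.2.1 rfl)
    have erest : ∀ u ∈ W', d v4 u = (if v4 < u then t else -t) := by
      intro u hu
      obtain ⟨hu0, hu1, hu2', hu3, hu4⟩ := (hmW' u).1 hu
      have hE : Eg v4 u := by
        refine ⟨h24.symm, h34.symm, hu2', hu3, hu4.symm, ?_⟩
        rintro (⟨h, -⟩ | ⟨h, -⟩)
        · exact (ne_of_gt h04) h
        · exact (ne_of_gt h14) h
      have hv : val v4 u = t := by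
        simp [hvaldef, ne_of_gt h04, ne_of_gt h14, hu0, hu1]
      simp only [hddef]
      rw [if_pos hE, hv]
    have hS : S v4 = d v4 v3 + (d v4 v2 + ∑ u ∈ W, d v4 u) := hsplit (d v4)
    rw [hsplitW (d v4), Finset.sum_congr rfl erest, ← hR4def, e0, e1, e4,
      hdnotE v4 v3 (fun h => h.2.2.2.1 rfl), hdnotE v4 v2 (fun h => h.2.2.1 rfl)] at hS
    rw [hS, hu2def]
    abel
  have hxch : ∀ v : V, ∃ a : A, a ≠ 0 ∧ a ≠ b v - S v := fun v => hA 0 (b v - S v)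
  choose x0 hx00 hx0g using hxch
  obtain ⟨x4, hx40, hx4z⟩ := hA 0 (-(b v2) - ∑ v ∈ W.erase v4, x0 v)
  set x : V → A := fun v => if v = v4 then x4 else x0 v with hxdef
  set y : V → A := fun v => b v - S v - x v with hydef
  set z : A := b v2 + ∑ v ∈ W, x v with hzdef
  have hxne : ∀ v, x v ≠ 0 := by
    intro v; simp only [hxdef]; split_ifs
    · exact hx40
    · exact hx00 v
  have hxv4 : x v4 = x4 := by simp [hxdef]
  have hxW : ∑ v ∈ W, x v = x4 + ∑ v ∈ W.erase v4, x0 v := by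
    rw [← Finset.add_sum_erase _ x h4W, hxv4]
    congr 1
    refine Finset.sum_congr rfl fun v hv => ?_
    simp only [hxdef]
    rw [if_neg (mem_erase.1 hv).1]
  have hzne : z ≠ 0 := by
    rw [hzdef, hxW]
    intro h
    apply hx4z
    have h' : x4 + (b v2 + ∑ v ∈ W.erase v4, x0 v) = 0 := by rw [← h]; abel
    rw [eq_neg_of_add_eq_zero_left h']
    abel
  have hyne : ∀ v, v ∈ W → y v ≠ 0 := by
    intro v hv
    simp only [hydef]
    by_cases h4 : v = v4
    · subst h4
      rw [hSv4, hxv4, sub_self, zero_sub]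
      exact neg_ne_zero.2 hx40
    · have hx : x v = x0 v := by simp only [hxdef]; rw [if_neg h4]
      rw [hx]
      exact sub_ne_zero.mpr (Ne.symm (hx0g v))
  set f : V → V → A := fun a c =>
    if a = c then 0
    else if a = v2 then (if c = v3 then z else - x c)
    else if c = v2 then (if a = v3 then - z else x a)
    else if a = v3 then - y c
    else if c = v3 then y a
    else d a c with hfdef
  have hfaa : ∀ a, f a a = 0 := by intro a; simp [hfdef]
  have hf23 : f v2 v3 = z := by simp [hfdef, h23]
  have hf32 : f v3 v2 = -z := by
    simp [hfdef, Ne.symm h23]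
  have hf2w : ∀ c, c ≠ v2 → c ≠ v3 → f v2 c = - x c := by
    intro c hc2 hc3
    simp [hfdef, Ne.symm hc2, hc3]
  have hfw2 : ∀ a, a ≠ v2 → a ≠ v3 → f a v2 = x a := by
    intro a ha2 ha3
    simp [hfdef, ha2, ha3]
  have hf3w : ∀ c, c ≠ v2 → c ≠ v3 → f v3 c = - y c := by
    intro c hc2 hc3
    simp [hfdef, Ne.symm hc3, Ne.symm h23, hc2]
  have hfw3 : ∀ a, a ≠ v2 → a ≠ v3 → f a v3 = y a := by
    intro a ha2 ha3
    simp [hfdef, ha3, ha2, Ne.symm h23]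
  have hfww : ∀ a c, a ≠ v2 → a ≠ v3 → c ≠ v2 → c ≠ v3 → f a c = d a c := by
    intro a c ha2 ha3 hc2 hc3
    by_cases hac : a = c
    · subst hac
      rw [hfaa, hdnotE a a (fun h => h.2.2.2.2.1 rfl)]
    · simp only [hfdef]
      rw [if_neg hac, if_neg ha2, if_neg hc2, if_neg ha3, if_neg hc3]
  refine ⟨f, ?_, ?_, ?_⟩
  · -- antisymmetry
    intro u v
    by_cases huv : u = v
    · subst huv; rw [hfaa, neg_zero]
    by_cases hu2 : u = v2
    · subst hu2
      by_cases hv3 : v = v3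
      · subst hv3; rw [hf23, hf32, neg_neg]
      · rw [hf2w v (Ne.symm huv) hv3, hfw2 v (Ne.symm huv) hv3]
    by_cases hv2 : v = v2
    · subst hv2
      by_cases hu3 : u = v3
      · subst hu3; rw [hf32, hf23]
      · rw [hfw2 u hu2 hu3, hf2w u hu2 hu3, neg_neg]
    by_cases hu3 : u = v3
    · subst hu3
      rw [hf3w v hv2 (Ne.symm huv), hfw3 v hv2 (Ne.symm huv)]
    by_cases hv3 : v = v3
    · subst hv3
      rw [hfw3 u hu2 hu3, hf3w u hu2 hu3, neg_neg]
    rw [hfww u v hu2 hu3 hv2 hv3, hfww v u hv2 hv3 hu2 hu3]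
    exact hdsymm u v
  · -- adjacency iff nonzero
    intro u v
    constructor
    · rintro ⟨huv, hp⟩
      by_cases hu2 : u = v2
      · subst hu2
        by_cases hv3 : v = v3
        · subst hv3; rw [hf23]; exact hzne
        · rw [hf2w v (Ne.symm huv) hv3]; exact neg_ne_zero.2 (hxne v)
      by_cases hv2 : v = v2
      · subst hv2
        by_cases hu3 : u = v3
        · subst hu3; rw [hf32]; exact neg_ne_zero.2 hzne
        · rw [hfw2 u hu2 hu3]; exact hxne u
      by_cases hu3 : u = v3
      · subst hu3
        rw [hf3w v hv2 (Ne.symm huv)]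
        exact neg_ne_zero.2 (hyne v ((hmW v).2 ⟨hv2, Ne.symm huv⟩))
      by_cases hv3 : v = v3
      · subst hv3
        rw [hfw3 u hu2 hu3]
        exact hyne u ((hmW u).2 ⟨hu2, hu3⟩)
      rw [hfww u v hu2 hu3 hv2 hv3]
      exact hdne u v ⟨hu2, hu3, hv2, hv3, huv, hp⟩
    · intro hne
      constructor
      · intro h; subst h; exact hne (hfaa u)
      · rintro (⟨h0, h1⟩ | ⟨h0, h1⟩) <;> apply hne
        · rw [h0, h1, hfww v0 v1 h02 h03 h12 h13]
          exact hdnotE _ _ (fun hE => hE.2.2.2.2.2 (Or.inl ⟨rfl, rfl⟩))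
        · rw [h0, h1, hfww v1 v0 h12 h13 h02 h03]
          exact hdnotE _ _ (fun hE => hE.2.2.2.2.2 (Or.inr ⟨rfl, rfl⟩))
  · -- boundary
    intro v
    by_cases hv2 : v = v2
    · rw [hv2]
      rw [hsplit (f v2), hf23, hfaa,
        Finset.sum_congr rfl (fun u hu => hf2w u ((hmW u).1 hu).1 ((hmW u).1 hu).2),
        Finset.sum_neg_distrib, hzdef]
      abel
    by_cases hv3 : v = v3
    · rw [hv3]
      rw [hsplit (f v3), hfaa, hf32,
        Finset.sum_congr rfl (fun u hu => hf3w u ((hmW u).1 hu).1 ((hmW u).1 hu).2),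
        Finset.sum_neg_distrib]
      have hyW : ∑ u ∈ W, y u =
          (∑ u ∈ W, b u) - (∑ u ∈ W, S u) - (∑ u ∈ W, x u) := by
        simp only [hydef]
        rw [Finset.sum_sub_distrib, Finset.sum_sub_distrib]
      have hSW : ∑ u ∈ W, S u = 0 := by
        have h' := hStot
        rw [hsplit S, hS3, hS2] at h'
        simpa using h'
      have hb3 : b v3 = -(b v2 + ∑ u ∈ W, b u) := by
        have h' := hb
        rw [hsplit b] at h'
        exact eq_neg_of_add_eq_zero_left h'
      rw [hyW, hSW, hzdef, hb3]
      abel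
    have hvW : v ∈ W := (hmW v).2 ⟨hv2, hv3⟩
    rw [hsplit (f v), hfw3 v hv2 hv3, hfw2 v hv2 hv3,
      Finset.sum_congr rfl (fun u hu => hfww v u hv2 hv3 ((hmW u).1 hu).1 ((hmW u).1 hu).2)]
    have hdW : ∑ u ∈ W, d v u = S v := by
      have h' : S v = d v v3 + (d v v2 + ∑ u ∈ W, d v u) := hsplit (d v)
      rw [hdnotE v v3 (fun h => h.2.2.2.1 rfl), hdnotE v v2 (fun h => h.2.2.1 rfl)] at h'
      simpa using h'.symm
    rw [hdW]
    simp only [hydef]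
    abel

/-- `Kₙ⁻`: the complete graph on `Fin n` with the edge between the first two
vertices deleted. -/
theorem stmt_4 (A : Type) [AddCommGroup A] (hA : 3 ≤ Cardinal.mk A)
    (n : ℕ) (hn : 5 ≤ n) :
    ((⊤ : SimpleGraph (Fin n)).deleteEdges
      {s((⟨0, by omega⟩ : Fin n), (⟨1, by omega⟩ : Fin n))}).AConnected A := by
  intro b hb
  have hAe : ∀ a b : A, ∃ c : A, c ≠ a ∧ c ≠ b := fun a b => Cardinal.three_le hA a b
  have h0 : (0 : ℕ) < n := by omega
  have h1 : (1 : ℕ) < n := by omega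
  have h2 : (2 : ℕ) < n := by omega
  have h3 : (3 : ℕ) < n := by omega
  have h4 : (4 : ℕ) < n := by omega
  obtain ⟨f, hanti, hiff, hbd⟩ := kcore hAe
    (⟨0, h0⟩ : Fin n) (⟨1, h1⟩ : Fin n) (⟨2, h2⟩ : Fin n) (⟨3, h3⟩ : Fin n) (⟨4, h4⟩ : Fin n)
    (by simp [Fin.ext_iff]) (by simp [Fin.ext_iff]) (by simp [Fin.ext_iff])
    (by simp [Fin.lt_def]) (by simp [Fin.ext_iff]) (by simp [Fin.ext_iff])
    (by simp [Fin.lt_def]) (by simp [Fin.ext_iff]) (by simp [Fin.ext_iff])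
    (by simp [Fin.ext_iff]) b hb
  refine ⟨f, hanti, ?_, hbd⟩
  intro u v
  rw [← hiff u v]
  simp only [SimpleGraph.deleteEdges_adj, SimpleGraph.top_adj, Set.mem_singleton_iff,
    Sym2.eq_iff]
end

section
/- Let A be a finite abelian group with |A| ≥ 3 and let n ≥ 3. The cycle Cₙ of length n is A-connected if and only if |A| ≥ n + 1. -/
open Finset
open scoped Fin.CommRing Fin.NatCast

private lemma two_ne_zero'' (m : ℕ) : (2 : Fin (m+3)) ≠ 0 := by
  simp [Fin.ext_iff, Fin.val_two]
  rw [Nat.mod_eq_of_lt (by omega)]; omega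

private lemma cycle_adj_iff {m : ℕ} (u v : Fin (m+3)) :
    (SimpleGraph.cycleGraph (m+3)).Adj u v ↔ v = u + 1 ∨ u = v + 1 := by
  rw [SimpleGraph.cycleGraph_adj]
  constructor
  · rintro (h | h)
    · right; rw [sub_eq_iff_eq_add] at h; rw [h]; exact add_comm 1 _
    · left; rw [sub_eq_iff_eq_add] at h; rw [h]; exact add_comm 1 _
  · rintro (h | h)
    · right; rw [h]; ring
    · left; rw [h]; ring

private lemma hexcl {m : ℕ} (u v : Fin (m+3)) (h1 : v = u + 1) (h2 : u = v + 1) : False := by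
  rw [h1, add_assoc] at h2
  have : (1 + 1 : Fin (m+3)) = 0 := (left_eq_add.mp h2)
  rw [one_add_one_eq_two] at this
  exact two_ne_zero'' m this

private lemma boundary_eq {A : Type} [AddCommGroup A] {m : ℕ}
    (f : Fin (m+3) → Fin (m+3) → A)
    (hsupp : ∀ u v, ¬(SimpleGraph.cycleGraph (m+3)).Adj u v → f u v = 0)
    (hskew : ∀ u v, f u v = - f v u)
    (v : Fin (m+3)) :
    ∑ u, f v u = f v (v+1) - f (v-1) v := by
  have h1 : v + 1 ≠ v - 1 := by
    intro h
    have : (2 : Fin (m+3)) = 0 := by linear_combination h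
    exact two_ne_zero'' m this
  have hsum : ∑ u ∈ ({v+1, v-1} : Finset (Fin (m+3))), f v u = ∑ u, f v u := by
    refine Finset.sum_subset (Finset.subset_univ _) ?_
    intro u _ hu
    simp only [Finset.mem_insert, Finset.mem_singleton, not_or] at hu
    apply hsupp
    rw [cycle_adj_iff]
    rintro (h | h)
    · exact hu.1 h
    · exact hu.2 (by rw [h]; ring)
  rw [← hsum, Finset.sum_pair h1, hskew v (v-1)]
  abel

private lemma forward {A : Type} [AddCommGroup A] [Fintype A] {m : ℕ}
    (hc : (SimpleGraph.cycleGraph (m+3)).AConnected A) : m + 3 + 1 ≤ Fintype.card A := by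
  by_contra hlt
  push_neg at hlt
  have hcard : Fintype.card A ≤ m + 3 := by omega
  have hpos : 0 < Fintype.card A := Fintype.card_pos
  let e : Fin (Fintype.card A) ≃ A := (Fintype.equivFin A).symm
  let t : Fin (m+3) → A := fun i => e ⟨i.val % Fintype.card A, Nat.mod_lt _ hpos⟩
  have ht : Function.Surjective t := by
    intro a
    refine ⟨⟨(e.symm a).val, lt_of_lt_of_le (e.symm a).isLt hcard⟩, ?_⟩
    show e ⟨(e.symm a).val % Fintype.card A, _⟩ = a
    have hmod : (e.symm a).val % Fintype.card A = (e.symm a).val :=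
      Nat.mod_eq_of_lt (e.symm a).isLt
    rw [show (⟨(e.symm a).val % Fintype.card A, Nat.mod_lt _ hpos⟩ : Fin (Fintype.card A))
        = e.symm a from Fin.ext hmod]
    exact e.apply_symm_apply a
  set b : Fin (m+3) → A := fun i => t i - t (i - 1) with hbdef
  have hb : ∑ v, b v = 0 := by
    simp only [hbdef, Finset.sum_sub_distrib]
    rw [Fintype.sum_equiv (Equiv.subRight (1 : Fin (m+3))) (fun i => t (i - 1)) t (fun i => rfl)]
    exact sub_self _
  obtain ⟨f, hskew, hadj, hbd⟩ := hc b hb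
  set x : Fin (m+3) → A := fun i => f i (i+1) with hx
  have hstep : ∀ v : Fin (m+3), x v - t v = x (v - 1) - t (v - 1) := by
    intro v
    have hsupp : ∀ u w, ¬(SimpleGraph.cycleGraph (m+3)).Adj u w → f u w = 0 := by
      intro u w h
      by_contra h0
      exact h ((hadj u w).mpr h0)
    have h1 := boundary_eq f hsupp hskew v
    rw [hbd v] at h1
    have h2 : f (v-1) v = x (v-1) := by
      simp only [hx]
      rw [sub_add_cancel]
    rw [h2] at h1
    have h3 : t v - t (v-1) = x v - x (v-1) := h1
    rw [sub_eq_sub_iff_sub_eq_sub]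
    exact h3.symm
  have hconst : ∀ k : ℕ, x (k : Fin (m+3)) - t (k : Fin (m+3)) = x 0 - t 0 := by
    intro k
    induction k with
    | zero => simp
    | succ k ih =>
      have hc1 : ((k+1 : ℕ) : Fin (m+3)) = (k : Fin (m+3)) + 1 := by push_cast; ring
      rw [hc1, ← ih]
      have h := hstep ((k : Fin (m+3)) + 1)
      rw [add_sub_cancel_right] at h
      exact h
  have hall : ∀ i : Fin (m+3), x i = t i + (x 0 - t 0) := by
    intro i
    have h := hconst i.val
    rw [Fin.cast_val_eq_self] at h
    rw [← h]
    abel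
  obtain ⟨i, hi⟩ := ht (t 0 - x 0)
  have hzero : x i = 0 := by rw [hall i, hi]; abel
  have hadj' : (SimpleGraph.cycleGraph (m+3)).Adj i (i+1) := by
    rw [cycle_adj_iff]; left; rfl
  exact ((hadj i (i+1)).mp hadj') hzero

private lemma backward {A : Type} [AddCommGroup A] [Fintype A] {m : ℕ}
    (hcard : m + 3 + 1 ≤ Fintype.card A) : (SimpleGraph.cycleGraph (m+3)).AConnected A := by
  intro b hb
  classical
  set s : Fin (m+3) → A := fun i => ∑ j ∈ Finset.univ.filter (fun j => j ≤ i), b j with hs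
  obtain ⟨c, hc⟩ : ∃ c : A, ∀ i : Fin (m+3), c + s i ≠ 0 := by
    by_contra h
    push_neg at h
    have hsub : (Finset.univ : Finset A) ⊆
        Finset.univ.image (fun i : Fin (m+3) => - s i) := by
      intro c _
      obtain ⟨i, hi⟩ := h c
      simp only [Finset.mem_image]
      exact ⟨i, Finset.mem_univ i, by rw [eq_comm, eq_neg_iff_add_eq_zero]; exact hi⟩
    have h1 := Finset.card_le_card hsub
    rw [Finset.card_univ] at h1
    have h2 := Finset.card_image_le (s := (Finset.univ : Finset (Fin (m+3))))
      (f := fun i => - s i)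
    rw [Finset.card_univ, Fintype.card_fin] at h2
    omega
  set x : Fin (m+3) → A := fun i => c + s i with hxdef
  have hx0 : ∀ i, x i ≠ 0 := hc
  set f : Fin (m+3) → Fin (m+3) → A :=
    fun u v => if v = u + 1 then x u else if u = v + 1 then - x v else 0 with hfdef
  have hskew : ∀ u v, f u v = - f v u := by
    intro u v
    by_cases h1 : v = u + 1 <;> by_cases h2 : u = v + 1
    · exact absurd h2 (fun h2 => hexcl u v h1 h2)
    · simp only [hfdef, if_pos h1, if_neg h2, neg_neg]
    · simp only [hfdef, if_neg h1, if_pos h2]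
    · simp only [hfdef, if_neg h1, if_neg h2, neg_zero]
  have hadjf : ∀ u v, (SimpleGraph.cycleGraph (m+3)).Adj u v ↔ f u v ≠ 0 := by
    intro u v
    rw [cycle_adj_iff]
    by_cases h1 : v = u + 1
    · simp only [hfdef, if_pos h1]
      exact ⟨fun _ => hx0 u, fun _ => Or.inl h1⟩
    · by_cases h2 : u = v + 1
      · simp only [hfdef, if_neg h1, if_pos h2, ne_eq, neg_eq_zero]
        exact ⟨fun _ => hx0 v, fun _ => Or.inr h2⟩
      · simp [hfdef, h1, h2]
  refine ⟨f, hskew, hadjf, ?_⟩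
  intro v
  have hsupp : ∀ u w, ¬(SimpleGraph.cycleGraph (m+3)).Adj u w → f u w = 0 := by
    intro u w h
    by_contra h0
    exact h ((hadjf u w).mpr h0)
  rw [boundary_eq f hsupp hskew v]
  have hfv1 : f v (v+1) = x v := by simp only [hfdef, if_pos rfl]
  have hfv2 : f (v-1) v = x (v-1) := by
    have h : v = (v - 1) + 1 := by ring
    simp only [hfdef]
    rw [if_pos h]
  rw [hfv1, hfv2]
  have hsub : x v - x (v-1) = s v - s (v-1) := by
    simp only [hxdef]
    abel
  rw [hsub]
  by_cases hv : v = 0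
  · subst hv
    have h01 : (0 - 1 : Fin (m+3)) = Fin.last (m+2) := by
      rw [Fin.ext_iff, Fin.coe_sub_one, if_pos rfl]; rfl
    have hslast : s (Fin.last (m+2)) = 0 := by
      simp only [hs]
      rw [Finset.filter_true_of_mem (fun j _ => Fin.le_last j)]
      exact hb
    have hs0 : s 0 = b 0 := by
      simp only [hs]
      rw [show Finset.univ.filter (fun j : Fin (m+3) => j ≤ 0) = {0} by
        ext j; simp [Fin.le_zero_iff']]
      exact Finset.sum_singleton _ _
    rw [h01, hslast, hs0, sub_zero]
  · have hval : (v - 1).val = v.val - 1 := by rw [Fin.coe_sub_one, if_neg hv]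
    have hv0 : v.val ≠ 0 := fun h => hv (Fin.ext h)
    have hfil : Finset.univ.filter (fun j : Fin (m+3) => j ≤ v)
        = insert v (Finset.univ.filter (fun j : Fin (m+3) => j ≤ v - 1)) := by
      ext j
      simp only [Finset.mem_filter, Finset.mem_univ, true_and, Finset.mem_insert]
      rw [Fin.le_def, Fin.le_def, Fin.ext_iff, hval]
      omega
    have hnotmem : v ∉ Finset.univ.filter (fun j : Fin (m+3) => j ≤ v - 1) := by
      simp only [Finset.mem_filter, Finset.mem_univ, true_and, Fin.le_def, hval]
      omega
    simp only [hs]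
    rw [hfil, Finset.sum_insert hnotmem]
    exact add_sub_cancel_right _ _

theorem stmt_5 (A : Type) [AddCommGroup A] [Fintype A] (hA : 3 ≤ Fintype.card A)
    (n : ℕ) (hn : 3 ≤ n) :
    (SimpleGraph.cycleGraph n).AConnected A ↔ n + 1 ≤ Fintype.card A := by
  obtain ⟨m, rfl⟩ : ∃ m, n = m + 3 := ⟨n - 3, by omega⟩
  exact ⟨forward, backward⟩
end

section
/- Let A be an abelian group with |A| ≥ 3. For all integers m ≥ n ≥ 4, the complete bipartite graph K_{m,n} is A-connected. -/
open Finset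

namespace AconnAux

variable {A : Type} [AddCommGroup A]

/-- Solution predicate encoding a 2×4 block with column sums `u`:
a row `x` with nonzero entries, entries different from `u`, and prescribed sum `r`. -/
def Sol4 (u : Fin 4 → A) (r : A) : Prop :=
  ∃ x : Fin 4 → A, (∀ j, x j ≠ 0) ∧ (∀ j, x j ≠ u j) ∧ ∑ j, x j = r

/-- Feasibility of an all-nonzero `m × n` matrix with row sums `r` and column sums `c`. -/
def Feas (m n : ℕ) (r : Fin m → A) (c : Fin n → A) : Prop :=
  ∃ g : Fin m → Fin n → A, (∀ i j, g i j ≠ 0) ∧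
    (∀ i, ∑ j, g i j = r i) ∧ (∀ j, ∑ i, g i j = c j)

section SolLemmas

variable (k2 : ∀ s : A, ∃ x : A, x ≠ 0 ∧ x ≠ s)
include k2

lemma sol4_zeros12 (u0 u3 r : A) : Sol4 ![u0, 0, 0, u3] r := by
  obtain ⟨x0, hx0, hx0'⟩ := k2 u0
  obtain ⟨x3, hx3, hx3'⟩ := k2 u3
  obtain ⟨x1, hx1, hx1'⟩ := k2 (r - x0 - x3)
  refine ⟨![x0, x1, r - x0 - x3 - x1, x3], ?_, ?_, ?_⟩
  · intro j
    fin_cases j <;> simp_all [sub_ne_zero]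
    exact fun h => hx1' h.symm
  · intro j
    fin_cases j <;> simp_all [sub_ne_zero]
    exact fun h => hx1' h.symm
  · simp [Fin.sum_univ_four]; abel

lemma sol4_zeros01 (u2 u3 r : A) : Sol4 ![0, 0, u2, u3] r := by
  obtain ⟨x2, hx2, hx2'⟩ := k2 u2
  obtain ⟨x3, hx3, hx3'⟩ := k2 u3
  obtain ⟨x0, hx0, hx0'⟩ := k2 (r - x2 - x3)
  refine ⟨![x0, r - x2 - x3 - x0, x2, x3], ?_, ?_, ?_⟩
  · intro j
    fin_cases j <;> simp_all [sub_ne_zero]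
    exact fun h => hx0' h.symm
  · intro j
    fin_cases j <;> simp_all [sub_ne_zero]
    exact fun h => hx0' h.symm
  · simp [Fin.sum_univ_four]; abel

lemma sol4_zeros02 (u1 u3 r : A) : Sol4 ![0, u1, 0, u3] r := by
  obtain ⟨x1, hx1, hx1'⟩ := k2 u1
  obtain ⟨x3, hx3, hx3'⟩ := k2 u3
  obtain ⟨x0, hx0, hx0'⟩ := k2 (r - x1 - x3)
  refine ⟨![x0, x1, r - x1 - x3 - x0, x3], ?_, ?_, ?_⟩
  · intro j
    fin_cases j <;> simp_all [sub_ne_zero]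
    exact fun h => hx0' h.symm
  · intro j
    fin_cases j <;> simp_all [sub_ne_zero]
    exact fun h => hx0' h.symm
  · simp [Fin.sum_univ_four]; abel

lemma sol4_zeros03 (u1 u2 r : A) : Sol4 ![0, u1, u2, 0] r := by
  obtain ⟨x1, hx1, hx1'⟩ := k2 u1
  obtain ⟨x2, hx2, hx2'⟩ := k2 u2
  obtain ⟨x0, hx0, hx0'⟩ := k2 (r - x1 - x2)
  refine ⟨![x0, x1, x2, r - x1 - x2 - x0], ?_, ?_, ?_⟩
  · intro j
    fin_cases j <;> simp_all [sub_ne_zero]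
    exact fun h => hx0' h.symm
  · intro j
    fin_cases j <;> simp_all [sub_ne_zero]
    exact fun h => hx0' h.symm
  · simp [Fin.sum_univ_four]; abel

/-- With at least four elements (avoidance of two values), one zero in `u` suffices. -/
lemma sol4_k3 (k3 : ∀ s t : A, ∃ x : A, x ≠ 0 ∧ x ≠ s ∧ x ≠ t)
    (u1 u2 u3 r : A) : Sol4 ![0, u1, u2, u3] r := by
  obtain ⟨x1, hx1, hx1'⟩ := k2 u1
  obtain ⟨x2, hx2, hx2'⟩ := k2 u2
  obtain ⟨x3, hx3, hx3', hx3''⟩ := k3 u3 (r - x1 - x2)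
  refine ⟨![r - x1 - x2 - x3, x1, x2, x3], ?_, ?_, ?_⟩
  · intro j
    fin_cases j <;> simp_all [sub_ne_zero]
    exact fun h => hx3'' h.symm
  · intro j
    fin_cases j <;> simp_all [sub_ne_zero]
    exact fun h => hx3'' h.symm
  · simp [Fin.sum_univ_four]; abel

end SolLemmas

lemma neg_ne_self_of_three (h3 : ∀ x : A, x + x + x = 0) {u : A} (hu : u ≠ 0) :
    -u ≠ u := by
  intro h
  apply hu
  have h2 : u + u = 0 := neg_eq_iff_add_eq_zero.mp h
  have h3u := h3 u
  rw [add_assoc, h2, add_zero] at h3u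
  exact h3u

/-- The `Sol4` lemma for three-element groups: all of `u1, u2, u3` nonzero forces the
solution up to the free first entry. -/
lemma sol4_z3 (h3 : ∀ x : A, x + x + x = 0) (u1 u2 u3 r : A)
    (h1 : u1 ≠ 0) (h2 : u2 ≠ 0) (h3' : u3 ≠ 0) (hr : r + u1 + u2 + u3 ≠ 0) :
    Sol4 ![0, u1, u2, u3] r := by
  refine ⟨![r + u1 + u2 + u3, -u1, -u2, -u3], ?_, ?_, ?_⟩
  · intro j; fin_cases j <;> simp_all
  · intro j
    fin_cases j <;> simp_all
    exacts [neg_ne_self_of_three h3 h1, neg_ne_self_of_three h3 h2,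
      neg_ne_self_of_three h3 h3']
  · simp [Fin.sum_univ_four]; abel

/-- Stack two 2×4 blocks into a full 4×4 matrix. -/
lemma assemble (r c u w : Fin 4 → A) (hc : ∀ j, u j + w j = c j)
    (hu : ∑ j, u j = r 0 + r 1) (hw : ∑ j, w j = r 2 + r 3)
    (hx : Sol4 u (r 0)) (hy : Sol4 w (r 2)) : Feas 4 4 r c := by
  obtain ⟨x, hx0, hxu, hxs⟩ := hx
  obtain ⟨y, hy0, hyw, hys⟩ := hy
  refine ⟨![x, fun j => u j - x j, y, fun j => w j - y j], ?_, ?_, ?_⟩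
  · intro i j
    fin_cases i
    · exact hx0 j
    · simpa [sub_ne_zero] using fun h => hxu j h.symm
    · exact hy0 j
    · simpa [sub_ne_zero] using fun h => hyw j h.symm
  · intro i
    fin_cases i
    · simpa using hxs
    · show ∑ j, (u j - x j) = r 1
      rw [Finset.sum_sub_distrib, hxs, hu]; abel
    · simpa using hys
    · show ∑ j, (w j - y j) = r 3
      rw [Finset.sum_sub_distrib, hys, hw]; abel
  · intro j
    show x j + ((u j - x j) + (y j + ((w j - y j) + 0))) = c j
    rw [← hc j]; abel

/-- The 4×4 case, given a solution of the top 2×4 block for the canonical column split. -/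
lemma feas44_core
    (k2 : ∀ s : A, ∃ x : A, x ≠ 0 ∧ x ≠ s)
    (r c : Fin 4 → A) (hs : ∑ j, r j = ∑ j, c j)
    (top : Sol4 ![0, c 1, c 2, r 0 + r 1 - c 1 - c 2] (r 0)) :
    Feas 4 4 r c := by
  set t : A := r 0 + r 1 - c 1 - c 2 with hd
  apply assemble r c ![0, c 1, c 2, t] ![c 0, 0, 0, c 3 - t]
  · intro j; fin_cases j <;> simp
  · simp [Fin.sum_univ_four, hd]
  · have hs' : c 0 + c 1 + c 2 + c 3 = r 0 + r 1 + r 2 + r 3 := by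
      rw [Fin.sum_univ_four, Fin.sum_univ_four] at hs; rw [← hs]
    rw [Fin.sum_univ_four]
    show c 0 + 0 + 0 + (c 3 - t) = r 2 + r 3
    have : c 0 + 0 + 0 + (c 3 - t) = c 0 + c 1 + c 2 + c 3 - (r 0 + r 1) := by
      rw [hd]; abel
    rw [this, hs']; abel
  · exact top
  · exact sol4_zeros12 k2 (c 0) (c 3 - t) (r 2)

/-- The 4×4 case when the group has at least four elements. -/
lemma feas44_k3
    (k2 : ∀ s : A, ∃ x : A, x ≠ 0 ∧ x ≠ s)
    (k3 : ∀ s t : A, ∃ x : A, x ≠ 0 ∧ x ≠ s ∧ x ≠ t)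
    (r c : Fin 4 → A) (hs : ∑ j, r j = ∑ j, c j) : Feas 4 4 r c :=
  feas44_core k2 r c hs (sol4_k3 k2 k3 _ _ _ _)

/-- The 4×4 case for three-element groups when the first two row sums differ. -/
lemma feas44_z3
    (k2 : ∀ s : A, ∃ x : A, x ≠ 0 ∧ x ≠ s)
    (h3 : ∀ x : A, x + x + x = 0)
    (r c : Fin 4 → A) (hs : ∑ j, r j = ∑ j, c j) (hr01 : r 0 ≠ r 1) :
    Feas 4 4 r c := by
  apply feas44_core k2 r c hs
  set t : A := r 0 + r 1 - c 1 - c 2 with hd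
  by_cases h1 : c 1 = 0
  · rw [h1]; exact sol4_zeros01 k2 _ _ _
  by_cases h2 : c 2 = 0
  · rw [h2]; exact sol4_zeros02 k2 _ _ _
  by_cases ht : t = 0
  · rw [ht]; exact sol4_zeros03 k2 _ _ _
  apply sol4_z3 h3 _ _ _ _ h1 h2 ht
  intro h
  apply hr01
  have e1 : r 0 + c 1 + c 2 + t = r 0 + r 0 + r 1 := by rw [hd]; abel
  rw [e1] at h
  have e2 : r 1 - r 0 = (r 0 + r 0 + r 1) - (r 0 + r 0 + r 0) := by abel
  rw [h, h3 (r 0), sub_zero] at e2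
  exact (sub_eq_zero.mp e2).symm

lemma feas_perm_rows {m n : ℕ} (σ : Equiv.Perm (Fin m)) {r : Fin m → A}
    {c : Fin n → A} (h : Feas m n (r ∘ σ) c) : Feas m n r c := by
  obtain ⟨g, h0, hr, hc⟩ := h
  refine ⟨fun i => g (σ.symm i), fun i j => h0 _ j, fun i => ?_, fun j => ?_⟩
  · simpa using hr (σ.symm i)
  · rw [← hc j]
    exact Equiv.sum_comp σ.symm (fun i => g i j)

lemma feas_transpose {m n : ℕ} {r : Fin m → A} {c : Fin n → A}
    (h : Feas m n r c) : Feas n m c r := by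
  obtain ⟨g, h0, hr, hc⟩ := h
  exact ⟨fun j i => g i j, fun j i => h0 i j, hc, hr⟩

/-- Reduce an arbitrary unequal pair of row sums to the case of the first two rows. -/
lemma feas44_of_pair
    (F : ∀ r c : Fin 4 → A, ∑ j, r j = ∑ j, c j → r 0 ≠ r 1 → Feas 4 4 r c)
    (r c : Fin 4 → A) (hs : ∑ j, r j = ∑ j, c j) (i i' : Fin 4)
    (hne : r i ≠ r i') : Feas 4 4 r c := by
  have hii : i ≠ i' := fun h => hne (by rw [h])
  set σ1 : Equiv.Perm (Fin 4) := Equiv.swap 0 i with hσ1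
  set j' : Fin 4 := σ1.symm i' with hj'
  have hj'0 : j' ≠ 0 := by
    intro h
    apply hii
    have : i' = σ1 0 := by rw [← h, hj', Equiv.apply_symm_apply]
    rw [this, hσ1, Equiv.swap_apply_left]
  set τ : Equiv.Perm (Fin 4) := (Equiv.swap 1 j').trans σ1 with hτ
  have ht0 : τ 0 = i := by
    rw [hτ, Equiv.trans_apply, Equiv.swap_apply_of_ne_of_ne (by decide) (Ne.symm hj'0),
      hσ1, Equiv.swap_apply_left]
  have ht1 : τ 1 = i' := by
    rw [hτ, Equiv.trans_apply, Equiv.swap_apply_left, hj', Equiv.apply_symm_apply]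
  apply feas_perm_rows τ
  apply F
  · rw [← hs]
    exact Equiv.sum_comp τ r
  · show r (τ 0) ≠ r (τ 1)
    rw [ht0, ht1]; exact hne

lemma three_struct {a b : A} (ha : a ≠ 0) (hb : b ≠ 0) (hab : a ≠ b)
    (hz : ∀ v : A, v = 0 ∨ v = a ∨ v = b) :
    a + b = 0 ∧ (∀ x : A, x + x + x = 0) := by
  have hab0 : a + b = 0 := by
    rcases hz (a + b) with h | h | h
    · exact h
    · exact absurd (add_eq_left.mp h) hb
    · exact absurd (add_eq_right.mp h) ha
  refine ⟨hab0, fun x => ?_⟩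
  have haa : a + a = b := by
    rcases hz (a + a) with h | h | h
    · exact absurd ((eq_neg_of_add_eq_zero_left h).trans
        (eq_neg_of_add_eq_zero_right hab0).symm) hab
    · exact absurd (add_eq_right.mp h) ha
    · exact h
  have hbb : b + b = a := by
    rcases hz (b + b) with h | h | h
    · exact absurd ((eq_neg_of_add_eq_zero_left hab0).trans
        (eq_neg_of_add_eq_zero_left h).symm) hab
    · exact h
    · exact absurd (add_eq_right.mp h) hb
  rcases hz x with h | h | h
  · rw [h]; simp
  · rw [h, haa, add_comm b a]; exact hab0
  · rw [h, hbb]; exact hab0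

/-- The 4×4 case over a three-element group. -/
lemma feas44_z3_master {a b : A} (ha : a ≠ 0) (hb : b ≠ 0) (hab : a ≠ b)
    (hab0 : a + b = 0) (h3 : ∀ x : A, x + x + x = 0)
    (k2 : ∀ s : A, ∃ x : A, x ≠ 0 ∧ x ≠ s)
    (r c : Fin 4 → A) (hs : ∑ j, r j = ∑ j, c j) : Feas 4 4 r c := by
  by_cases hrr : ∀ i i' : Fin 4, r i = r i'
  · by_cases hcc : ∀ j j' : Fin 4, c j = c j'
    · -- constant margins
      have hfour : ∀ x : A, x + x + x + x = x := fun x => by rw [h3 x, zero_add]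
      have hcr : c 0 = r 0 := by
        rw [Fin.sum_univ_four, Fin.sum_univ_four] at hs
        rw [hrr 1 0, hrr 2 0, hrr 3 0, hcc 1 0, hcc 2 0, hcc 3 0] at hs
        rw [← hfour (c 0), ← hfour (r 0), hs]
      by_cases hz0 : r 0 = 0
      · -- zero margins : explicit matrix
        have hr0 : ∀ i : Fin 4, r i = 0 := fun i => (hrr i 0).trans hz0
        have hc0 : ∀ j : Fin 4, c j = 0 := fun j => (hcc j 0).trans (hcr.trans hz0)
        have h4 : a + a + b + b = 0 := by
          have e : a + a + b + b = (a + b) + (a + b) := by abel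
          rw [e, hab0, add_zero]
        have h4b : b + a + a + b = 0 := by rw [← h4]; abel
        have h4c : b + b + a + a = 0 := by rw [← h4]; abel
        have h4d : a + b + b + a = 0 := by rw [← h4]; abel
        refine ⟨![![a, a, b, b], ![b, a, a, b], ![b, b, a, a], ![a, b, b, a]],
          ?_, ?_, ?_⟩
        · intro i j
          fin_cases i <;> fin_cases j <;> simp [Matrix.vecHead, Matrix.vecTail, ha, hb]
        · intro i
          fin_cases i <;> simp [Fin.sum_univ_four, hr0] <;>
            first | exact h4 | exact h4b | exact h4c | exact h4d
        · intro j
          fin_cases j <;> simp [Fin.sum_univ_four, hc0] <;>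
            first | exact h4 | exact h4b | exact h4c | exact h4d
      · -- constant nonzero margins
        refine ⟨fun _ _ => r 0, fun _ _ => hz0, fun i => ?_, fun j => ?_⟩
        · rw [hrr i 0]
          simp only [Fin.sum_univ_four]
          exact hfour (r 0)
        · rw [hcc j 0, hcr]
          simp only [Fin.sum_univ_four]
          exact hfour (r 0)
    · push_neg at hcc
      obtain ⟨j, j', hne⟩ := hcc
      exact feas_transpose (feas44_of_pair (feas44_z3 k2 h3) c r hs.symm j j' hne)
  · push_neg at hrr
    obtain ⟨i, i', hne⟩ := hrr
    exact feas44_of_pair (feas44_z3 k2 h3) r c hs i i' hne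

lemma k3_of_triple {a b v : A} (ha : a ≠ 0) (hb : b ≠ 0) (hv : v ≠ 0)
    (hba : b ≠ a) (hva : v ≠ a) (hvb : v ≠ b) (s t : A) :
    ∃ x : A, x ≠ 0 ∧ x ≠ s ∧ x ≠ t := by
  by_cases h1 : a ≠ s ∧ a ≠ t
  · exact ⟨a, ha, h1.1, h1.2⟩
  by_cases h2 : b ≠ s ∧ b ≠ t
  · exact ⟨b, hb, h2.1, h2.2⟩
  push_neg at h1 h2
  refine ⟨v, hv, ?_, ?_⟩
  · rintro rfl
    have h1' : a = t := h1 fun e => hva e.symm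
    have h2' : b = t := h2 fun e => hvb e.symm
    exact hba (h2'.trans h1'.symm)
  · rintro rfl
    have h1' : a = s := by
      by_contra hh
      exact hva (h1 hh).symm
    have h2' : b = s := by
      by_contra hh
      exact hvb (h2 hh).symm
    exact hba (h2'.trans h1'.symm)

/-- The 4×4 case for any abelian group with at least three elements. -/
lemma feas44_master (hA : 3 ≤ Cardinal.mk A)
    (r c : Fin 4 → A) (hs : ∑ j, r j = ∑ j, c j) : Feas 4 4 r c := by
  obtain ⟨a, ha, -⟩ := Cardinal.three_le hA 0 0
  obtain ⟨b, hb, hba⟩ := Cardinal.three_le hA 0 a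
  have k2 : ∀ s : A, ∃ x : A, x ≠ 0 ∧ x ≠ s := by
    intro s
    by_cases h : a = s
    · exact ⟨b, hb, fun e => hba (e.trans h.symm)⟩
    · exact ⟨a, ha, h⟩
  by_cases hz : ∀ v : A, v = 0 ∨ v = a ∨ v = b
  · obtain ⟨hab0, h3⟩ := three_struct ha hb (Ne.symm hba) hz
    exact feas44_z3_master ha hb (Ne.symm hba) hab0 h3 k2 r c hs
  · push_neg at hz
    obtain ⟨v, hv0, hva, hvb⟩ := hz
    exact feas44_k3 k2 (k3_of_triple ha hb hv0 hba hva hvb) r c hs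

lemma sum_decomp (k2 : ∀ s : A, ∃ x : A, x ≠ 0 ∧ x ≠ s) :
    ∀ n : ℕ, 2 ≤ n → ∀ s : A, ∃ v : Fin n → A, (∀ j, v j ≠ 0) ∧ ∑ j, v j = s := by
  intro n hn
  induction n, hn using Nat.le_induction with
  | base =>
    intro s
    obtain ⟨x, hx, hxs⟩ := k2 s
    refine ⟨![x, s - x], ?_, ?_⟩
    · intro j
      fin_cases j <;> simp [hx, sub_ne_zero]
      exact fun h => hxs h.symm
    · simp [Fin.sum_univ_two]
  | succ n hn ih =>
    intro s
    obtain ⟨x, hx, _⟩ := k2 0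
    obtain ⟨v, hv0, hvs⟩ := ih (s - x)
    refine ⟨Fin.snoc v x, ?_, ?_⟩
    · intro j
      refine Fin.lastCases ?_ (fun j => ?_) j
      · simpa using hx
      · simpa using hv0 j
    · rw [Fin.sum_univ_castSucc]
      simp [hvs]

lemma feas_succ_row {m n : ℕ} (k2 : ∀ s : A, ∃ x : A, x ≠ 0 ∧ x ≠ s)
    (hn : 2 ≤ n)
    (IH : ∀ r' : Fin m → A, ∀ c' : Fin n → A, ∑ i, r' i = ∑ j, c' j → Feas m n r' c')
    (r : Fin (m + 1) → A) (c : Fin n → A) (hs : ∑ i, r i = ∑ j, c j) :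
    Feas (m + 1) n r c := by
  obtain ⟨v, hv0, hvs⟩ := sum_decomp k2 n hn (r (Fin.last m))
  obtain ⟨g, h0, hr, hc⟩ := IH (fun i => r i.castSucc) (fun j => c j - v j) (by
    rw [Finset.sum_sub_distrib, hvs, ← hs, Fin.sum_univ_castSucc]
    abel)
  have hc' : ∀ j, ∑ i, g i j = c j - v j := hc
  refine ⟨Fin.snoc g v, ?_, ?_, ?_⟩
  · intro i j
    refine Fin.lastCases ?_ (fun i => ?_) i
    · simpa using hv0 j
    · simpa using h0 i j
  · intro i
    refine Fin.lastCases ?_ (fun i => ?_) i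
    · simpa using hvs
    · simpa using hr i
  · intro j
    rw [Fin.sum_univ_castSucc]
    simp only [Fin.snoc_castSucc, Fin.snoc_last]
    rw [hc' j]
    abel

lemma feas_succ_col {m n : ℕ} (k2 : ∀ s : A, ∃ x : A, x ≠ 0 ∧ x ≠ s)
    (hm : 2 ≤ m)
    (IH : ∀ r' : Fin m → A, ∀ c' : Fin n → A, ∑ i, r' i = ∑ j, c' j → Feas m n r' c')
    (r : Fin m → A) (c : Fin (n + 1) → A) (hs : ∑ i, r i = ∑ j, c j) :
    Feas m (n + 1) r c := by
  obtain ⟨v, hv0, hvs⟩ := sum_decomp k2 m hm (c (Fin.last n))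
  obtain ⟨g, h0, hr, hc⟩ := IH (fun i => r i - v i) (fun j => c j.castSucc) (by
    rw [Finset.sum_sub_distrib, hvs, hs, Fin.sum_univ_castSucc]
    abel)
  have hr' : ∀ i, ∑ j, g i j = r i - v i := hr
  refine ⟨fun i => Fin.snoc (g i) (v i), ?_, ?_, ?_⟩
  · intro i j
    refine Fin.lastCases ?_ (fun j => ?_) j
    · simpa using hv0 i
    · simpa using h0 i j
  · intro i
    rw [Fin.sum_univ_castSucc]
    simp only [Fin.snoc_castSucc, Fin.snoc_last]
    rw [hr' i]
    abel
  · intro j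
    refine Fin.lastCases ?_ (fun j => ?_) j
    · simpa using hvs
    · simpa using hc j

/-- The general `m × n` case, `m, n ≥ 4`. -/
lemma feas_ge4 (hA : 3 ≤ Cardinal.mk A) :
    ∀ m, 4 ≤ m → ∀ n, 4 ≤ n → ∀ (r : Fin m → A) (c : Fin n → A),
      ∑ i, r i = ∑ j, c j → Feas m n r c := by
  have k2 : ∀ s : A, ∃ x : A, x ≠ 0 ∧ x ≠ s := by
    intro s
    obtain ⟨a, ha, has⟩ := Cardinal.three_le hA 0 s
    exact ⟨a, ha, has⟩
  have h4n : ∀ n, 4 ≤ n → ∀ (r : Fin 4 → A) (c : Fin n → A),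
      ∑ i, r i = ∑ j, c j → Feas 4 n r c := by
    intro n hn
    induction n, hn using Nat.le_induction with
    | base => exact feas44_master hA
    | succ n hn ih => exact feas_succ_col k2 (by omega) ih
  intro m hm
  induction m, hm using Nat.le_induction with
  | base => exact h4n
  | succ m hm ih =>
    intro n hn
    exact feas_succ_row k2 (by omega) (ih n hn)

end AconnAux

theorem stmt_6 (A : Type) [AddCommGroup A] (hA : 3 ≤ Cardinal.mk A)
    (m n : ℕ) (hn : 4 ≤ n) (hmn : n ≤ m) :
    (completeBipartiteGraph (Fin m) (Fin n)).AConnected A := by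
  intro b hb
  have hs : ∑ i, b (Sum.inl i) = ∑ j, (-b (Sum.inr j) : A) := by
    rw [Fintype.sum_sum_type] at hb
    rw [Finset.sum_neg_distrib]
    exact eq_neg_of_add_eq_zero_left hb
  obtain ⟨g, h0, hr, hc⟩ :=
    AconnAux.feas_ge4 hA m (le_trans hn hmn) n hn
      (fun i => b (Sum.inl i)) (fun j => -b (Sum.inr j)) hs
  refine ⟨fun x y =>
      Sum.elim (fun i => Sum.elim (fun _ => (0 : A)) (fun j => g i j) y)
        (fun j => Sum.elim (fun i => -g i j) (fun _ => (0 : A)) y) x,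
    ?_, ?_, ?_⟩
  · rintro (i | j) (i' | j') <;> simp
  · rintro (i | j) (i' | j') <;> simp [h0]
  · rintro (i | j)
    · rw [Fintype.sum_sum_type]
      simpa using hr i
    · rw [Fintype.sum_sum_type]
      have := hc j
      simp only [Sum.elim_inl, Sum.elim_inr]
      rw [Finset.sum_const_zero, Finset.sum_neg_distrib, hc j]
      simp
end

section
/- For every integer t ≥ 2, the complete bipartite graph K_{2,t} is not Z₃-connected. -/
open Finset

theorem stmt_7 (t : ℕ) (h : 2 ≤ t) :
    ¬ (completeBipartiteGraph (Fin 2) (Fin t)).AConnected (ZMod 3) := by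
  intro H
  set b : Fin 2 ⊕ Fin t → ZMod 3 :=
    Sum.elim (fun i => if i = 0 then (t : ZMod 3) + 1 else -(2 * t + 1)) (fun _ => 1) with hb
  have hsum : ∑ v, b v = 0 := by
    rw [Fintype.sum_sum_type]
    simp [hb, Fin.sum_univ_two, mul_comm]
    ring
  obtain ⟨f, hanti, hadj, hbd⟩ := H b hsum
  have h0 : ∀ u v : Fin 2 ⊕ Fin t,
      ¬ (completeBipartiteGraph (Fin 2) (Fin t)).Adj u v → f u v = 0 := by
    intro u v hn
    by_contra hne
    exact hn ((hadj u v).mpr hne)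
  -- each right vertex j has f (inr j) (inl 0) = 2 and f (inr j) (inl 1) = 2
  have key : ∀ x y : ZMod 3, x ≠ 0 → y ≠ 0 → x + y = 1 → x = 2 := by decide
  have hval : ∀ j : Fin t, f (Sum.inr j) (Sum.inl 0) = 2 := by
    intro j
    have hsum' := hbd (Sum.inr j)
    rw [Fintype.sum_sum_type] at hsum'
    have hz : ∀ k : Fin t, f (Sum.inr j) (Sum.inr k) = 0 := by
      intro k
      exact h0 _ _ (by simp)
    rw [Finset.sum_congr rfl (fun k _ => hz k)] at hsum'
    simp [Fin.sum_univ_two, hb] at hsum'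
    have h1 : f (Sum.inr j) (Sum.inl 0) ≠ 0 := (hadj _ _).mp (by simp)
    have h2 : f (Sum.inr j) (Sum.inl 1) ≠ 0 := (hadj _ _).mp (by simp)
    exact key _ _ h1 h2 hsum'
  have hsum0 := hbd (Sum.inl 0)
  rw [Fintype.sum_sum_type] at hsum0
  have hz : ∀ i : Fin 2, f (Sum.inl 0) (Sum.inl i) = 0 := by
    intro i
    exact h0 _ _ (by simp)
  rw [Finset.sum_congr rfl (fun i _ => hz i)] at hsum0
  have hone : ∀ j : Fin t, f (Sum.inl 0) (Sum.inr j) = 1 := by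
    intro j
    rw [hanti, hval j]
    decide
  rw [Finset.sum_congr rfl (fun j _ => hone j)] at hsum0
  simp [hb] at hsum0
end

section
/- For every integer s ≥ 3, the complete bipartite graph K_{3,s} is not Z₃-connected. -/
open Finset

theorem stmt_8 (s : ℕ) (h : 3 ≤ s) :
    ¬ (completeBipartiteGraph (Fin 3) (Fin s)).AConnected (ZMod 3) := by
  intro hc
  set b : Fin 3 ⊕ Fin s → ZMod 3 :=
    fun v => match v with
      | Sum.inl 0 => 1
      | Sum.inl 1 => 2
      | _ => 0 with hb
  have hsum : ∑ v, b v = 0 := by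
    rw [Fintype.sum_sum_type]
    have h1 : ∑ i : Fin 3, b (Sum.inl i) = 0 := by
      rw [Fin.sum_univ_three]; show (1 : ZMod 3) + 2 + 0 = 0; decide
    have h2 : ∑ j : Fin s, b (Sum.inr j) = 0 :=
      Finset.sum_eq_zero fun j _ => rfl
    rw [h1, h2, add_zero]
  obtain ⟨f, hanti, hadj, hbd⟩ := hc b hsum
  have hz : ∀ u v, ¬ (completeBipartiteGraph (Fin 3) (Fin s)).Adj u v → f u v = 0 := by
    intro u v huv
    by_contra hne
    exact huv ((hadj u v).mpr hne)
  have hright : ∀ j : Fin s, ∀ i : Fin 3,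
      f (Sum.inr j) (Sum.inl i) = f (Sum.inr j) (Sum.inl 0) := by
    intro j i
    have hs := hbd (Sum.inr j)
    rw [Fintype.sum_sum_type] at hs
    have h2 : ∑ k : Fin s, f (Sum.inr j) (Sum.inr k) = 0 :=
      Finset.sum_eq_zero fun k _ => hz _ _ (by simp)
    rw [h2, add_zero, Fin.sum_univ_three] at hs
    have hb0 : b (Sum.inr j) = 0 := rfl
    rw [hb0] at hs
    have hn : ∀ i : Fin 3, f (Sum.inr j) (Sum.inl i) ≠ 0 := fun i =>
      (hadj _ _).mp (by simp)
    have key : ∀ a b c : ZMod 3, a ≠ 0 → b ≠ 0 → c ≠ 0 → a + b + c = 0 →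
        b = a ∧ c = a := by decide
    obtain ⟨h1, h2'⟩ := key _ _ _ (hn 0) (hn 1) (hn 2) hs
    fin_cases i <;> simp [h1, h2']
  have hleft : ∀ i : Fin 3, ∑ v, f (Sum.inl i) v =
      ∑ j : Fin s, - f (Sum.inr j) (Sum.inl 0) := by
    intro i
    rw [Fintype.sum_sum_type]
    have h1 : ∑ k : Fin 3, f (Sum.inl i) (Sum.inl k) = 0 :=
      Finset.sum_eq_zero fun k _ => hz _ _ (by simp)
    rw [h1, zero_add]
    refine Finset.sum_congr rfl fun j _ => ?_
    rw [hanti, hright j i]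
  have e0 := hbd (Sum.inl 0)
  have e1 := hbd (Sum.inl 1)
  rw [hleft 0] at e0
  rw [hleft 1] at e1
  have : b (Sum.inl 0) = b (Sum.inl 1) := e0.symm.trans e1
  have : (1 : ZMod 3) = 2 := this
  exact absurd this (by decide)
end

section
/- For every odd integer k ≥ 3, the wheel W_k is not Z₃-connected. -/
open Finset

/-- The wheel `W_k`: a cycle of length `k` together with a hub vertex (`none`)
joined to every vertex of the cycle. -/
def wheelGraph (k : ℕ) : SimpleGraph (Option (Fin k)) :=
  SimpleGraph.fromRel (fun x y =>
    x = none ∨ ∃ i j : Fin k, x = some i ∧ y = some j ∧ (SimpleGraph.cycleGraph k).Adj i j)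

open Fin.CommRing

theorem stmt_10 (k : ℕ) (hk : 3 ≤ k) (hko : Odd k) :
    ¬ (wheelGraph k).AConnected (ZMod 3) := by
  haveI : NeZero k := ⟨by omega⟩
  intro h
  obtain ⟨f, hanti, hadj, hsum⟩ := h 0 (by simp)
  have hone : (1 : Fin k).val = 1 := by
    rw [Fin.val_one']; exact Nat.mod_eq_of_lt (by omega)
  -- hub adjacency
  have hhub : ∀ i : Fin k, (wheelGraph k).Adj (some i) none := by
    intro i
    exact SimpleGraph.fromRel_adj .. |>.mpr ⟨by simp, Or.inr (Or.inl rfl)⟩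
  -- rim adjacency
  have hrim : ∀ i j : Fin k, (wheelGraph k).Adj (some i) (some j) ↔
      (SimpleGraph.cycleGraph k).Adj i j := by
    intro i j
    rw [wheelGraph, SimpleGraph.fromRel_adj]
    constructor
    · rintro ⟨hne, (⟨h1 | ⟨a, b, ha, hb, hab⟩⟩ | ⟨h1 | ⟨a, b, ha, hb, hab⟩⟩)⟩
      · exact absurd h1 (by simp)
      · obtain ⟨rfl⟩ := Option.some_injective _ ha
        obtain ⟨rfl⟩ := Option.some_injective _ hb
        exact hab
      · exact absurd h1 (by simp)
      · obtain ⟨rfl⟩ := Option.some_injective _ ha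
        obtain ⟨rfl⟩ := Option.some_injective _ hb
        exact hab.symm
    · intro hab
      exact ⟨by simpa using hab.ne, Or.inl (Or.inr ⟨i, j, rfl, rfl, hab⟩)⟩
  have hcyc : ∀ i j : Fin k, (SimpleGraph.cycleGraph k).Adj i j ↔ (j = i + 1 ∨ j = i - 1) := by
    intro i j
    rw [SimpleGraph.cycleGraph_adj']
    constructor
    · rintro (h1 | h1)
      · right
        have h2 : i - j = 1 := Fin.ext (by rw [hone]; exact h1)
        rw [sub_eq_iff_eq_add] at h2; subst h2; ring_nf
      · left
        have h2 : j - i = 1 := Fin.ext (by rw [hone]; exact h1)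
        rw [sub_eq_iff_eq_add] at h2; subst h2; ring_nf
    · rintro (rfl | rfl)
      · right; rw [add_sub_cancel_left]; exact hone
      · left; rw [sub_sub_cancel]; exact hone
  -- the rim edge values
  set x : Fin k → ZMod 3 := fun i => f (some i) (some (i + 1)) with hx
  have hx0 : ∀ i, x i ≠ 0 := by
    intro i
    exact (hadj _ _).mp ((hrim _ _).mpr ((hcyc _ _).mpr (Or.inl rfl)))
  -- the boundary equation at rim vertex i
  have key : ∀ i : Fin k, x i ≠ x (i - 1) := by
    intro i heq
    have hne : i - 1 ≠ i + 1 := by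
      intro he
      have h2 : (i + 1) - (i - 1) = 0 := by rw [he, sub_self]
      have h3 : ((i + 1) - (i - 1)) = 1 + 1 := by ring
      rw [h3] at h2
      have := congrArg Fin.val h2
      rw [Fin.val_add, hone, Fin.val_zero, Nat.mod_eq_of_lt (by omega)] at this
      omega
    have hzero : ∀ j : Fin k, j ∉ ({i - 1, i + 1} : Finset (Fin k)) →
        f (some i) (some j) = 0 := by
      intro j hj
      by_contra hne'
      have := (hcyc i j).mp ((hrim i j).mp ((hadj _ _).mpr hne'))
      simp only [Finset.mem_insert, Finset.mem_singleton] at hj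
      tauto
    have hsplit : ∑ u : Option (Fin k), f (some i) u
        = f (some i) none + ∑ j : Fin k, f (some i) (some j) := Fintype.sum_option _
    have hsub : ∑ j : Fin k, f (some i) (some j)
        = ∑ j ∈ ({i - 1, i + 1} : Finset (Fin k)), f (some i) (some j) := by
      refine (Finset.sum_subset (Finset.subset_univ _) ?_).symm
      intro j _ hj
      exact hzero j hj
    rw [Finset.sum_pair hne] at hsub
    have heqn := hsum (some i)
    rw [hsplit, hsub] at heqn
    have h1 : f (some i) (some (i - 1)) = - x (i - 1) := by
      rw [hanti]; congr 2
      rw [sub_add_cancel]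
    have h2 : f (some i) (some (i + 1)) = x i := rfl
    rw [h1, h2, heq] at heqn
    simp only [Pi.zero_apply] at heqn
    have hfin : f (some i) none = 0 := by
      simpa using heqn
    exact (hadj _ _).mp (hhub i) hfin
  have key' : ∀ i : Fin k, x (i + 1) = - x i := by
    intro i
    have h1 := key (i + 1)
    rw [add_sub_cancel_right] at h1
    have h2 := hx0 (i + 1)
    have h3 := hx0 i
    revert h1 h2 h3
    generalize x (i + 1) = a
    generalize x i = b
    revert a b
    decide
  have hiter : ∀ n : ℕ, x (n : Fin k) = (-1 : ZMod 3) ^ n * x 0 := by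
    intro n
    induction n with
    | zero => simp
    | succ n ih =>
      have : ((n + 1 : ℕ) : Fin k) = (n : Fin k) + 1 := by push_cast; ring
      rw [this, key', ih, pow_succ]; ring
  have hk0 := hiter k
  rw [Fin.natCast_self, hko.neg_one_pow] at hk0
  have := hx0 0
  revert hk0 this
  generalize x 0 = a
  revert a
  decide
end

section
/- Let A be an abelian group with |A| ≥ 3, let G be a finite simple graph, and let S ⊆ V(G). If the induced subgraph G[S] is A-connected and v ∈ V(G) ∖ S has at least 2 neighbors in S, then the induced subgraph G[S ∪ {v}] is A-connected. -/
open Finset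

lemma exists_ne_of_three_le {A : Type} (hA : 3 ≤ Cardinal.mk A) (p q : A) :
    ∃ r : A, r ≠ p ∧ r ≠ q := by
  by_contra h
  push_neg at h
  have hinj : Function.Injective (fun r : A => (r = p : Prop)) := by
    intro r r' hrr'
    simp only [eq_iff_iff] at hrr'
    by_cases hr : r = p
    · rw [hr, (hrr'.mp hr).symm]
    · have hr' : r' ≠ p := fun hh => hr (hrr'.mpr hh)
      rw [h r hr, h r' hr']
  have h2 : Cardinal.mk A ≤ 2 := by
    calc Cardinal.mk A ≤ Cardinal.mk Prop := Cardinal.mk_le_of_injective hinj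
    _ = 2 := Cardinal.mk_Prop
  exact absurd (hA.trans h2) (by norm_num)

theorem stmt_11 {V : Type} [Fintype V] [DecidableEq V]
    (G : SimpleGraph V) [DecidableRel G.Adj]
    (A : Type) [AddCommGroup A] (hA : 3 ≤ Cardinal.mk A)
    (S : Finset V) (v : V) (hv : v ∉ S)
    (hS : (G.induce (S : Set V)).AConnected A)
    (hnbr : 2 ≤ (S.filter fun u => G.Adj v u).card) :
    (G.induce ((insert v S : Finset V) : Set V)).AConnected A := by
  classical
  set N : Finset V := S.filter fun u => G.Adj v u with hN
  obtain ⟨x, hx, y, hy, hxy⟩ := Finset.one_lt_card.mp hnbr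
  have hxS : x ∈ S := (Finset.mem_filter.mp hx).1
  have hyS : y ∈ S := (Finset.mem_filter.mp hy).1
  obtain ⟨g, hg0, -⟩ := exists_ne_of_three_le hA 0 0
  intro b hb
  set B : V → A := fun u => if h : u ∈ insert v S then b ⟨u, Finset.mem_coe.mpr h⟩ else 0 with hB
  have hBv : B v = b ⟨v, Finset.mem_coe.mpr (Finset.mem_insert_self v S)⟩ := by
    simp [hB]
  set M : Finset V := (N.erase x).erase y with hM
  set s0 : A := B v - M.card • g with hs0
  obtain ⟨c, hc0, hcs⟩ := exists_ne_of_three_le hA 0 s0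
  set d : A := s0 - c with hd
  have hd0 : d ≠ 0 := by
    intro h
    apply hcs
    rw [hd] at h
    linear_combination (norm := abel_nf) -h
  set a : V → A := fun u => if u = x then c else if u = y then d else if u ∈ N then g else 0
    with ha
  have hax : a x = c := by simp [ha]
  have hay : a y = d := by simp [ha, hxy.symm]
  have haM : ∀ u ∈ M, a u = g := by
    intro u hu
    have h1 : u ≠ y := (Finset.mem_erase.mp hu).1
    have h2 : u ≠ x := (Finset.mem_erase.mp ((Finset.mem_erase.mp hu).2)).1
    have h3 : u ∈ N := (Finset.mem_erase.mp ((Finset.mem_erase.mp hu).2)).2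
    simp [ha, h1, h2, h3]
  have haN : ∀ u, u ∉ N → a u = 0 := by
    intro u hu
    have h2 : u ≠ x := fun h => hu (h ▸ hx)
    have h1 : u ≠ y := fun h => hu (h ▸ hy)
    simp [ha, h1, h2, hu]
  have ha_ne : ∀ u, u ∈ N ↔ a u ≠ 0 := by
    intro u
    constructor
    · intro hu
      by_cases h2 : u = x
      · subst h2; rw [hax]; exact hc0
      by_cases h1 : u = y
      · subst h1; rw [hay]; exact hd0
      · simpa [ha, h1, h2, hu] using hg0
    · intro h
      by_contra hu
      exact h (haN u hu)
  have haSum : ∑ u ∈ S, a u = B v := by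
    have hsub : N ⊆ S := Finset.filter_subset _ _
    have h1 : ∑ u ∈ S, a u = ∑ u ∈ N, a u := by
      refine (Finset.sum_subset hsub ?_).symm
      intro u _ hu; exact haN u hu
    have hyN : y ∈ N.erase x := Finset.mem_erase.mpr ⟨hxy.symm, hy⟩
    have h2 : ∑ u ∈ N, a u = a x + ∑ u ∈ N.erase x, a u :=
      (Finset.add_sum_erase N a hx).symm
    have h3 : ∑ u ∈ N.erase x, a u = a y + ∑ u ∈ M, a u :=
      (Finset.add_sum_erase (N.erase x) a hyN).symm
    have h4 : ∑ u ∈ M, a u = M.card • g := by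
      rw [Finset.sum_congr rfl haM, Finset.sum_const]
    rw [h1, h2, h3, h4, hax, hay, hd, hs0]
    abel
  -- sum of B over insert v S is 0
  have hBsum : B v + ∑ u ∈ S, B u = 0 := by
    rw [← Finset.sum_insert hv]
    rw [Finset.sum_subtype (p := fun u => u ∈ ((insert v S : Finset V) : Set V))
      (insert v S) (fun u => Finset.mem_coe.symm) B, ← hb]
    refine Finset.sum_congr rfl fun u _ => ?_
    have h2 : (u : V) ∈ insert v S := Finset.mem_coe.mp u.2
    rw [hB]
    simp only [dif_pos h2]
  have hsum_b' : ∑ u : (S : Set V), (B u.1 + a u.1) = 0 := by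
    have e1 : ∑ u : (S : Set V), (B u.1 + a u.1) = ∑ u ∈ S, (B u + a u) :=
      (Finset.sum_subtype (p := fun u => u ∈ (S : Set V)) S
        (fun u => Finset.mem_coe.symm) (fun u => B u + a u)).symm
    rw [e1, Finset.sum_add_distrib, haSum, add_comm]
    exact hBsum
  obtain ⟨g0, hg0a, hg0e, hg0b⟩ := hS (fun u => B u.1 + a u.1) hsum_b'
  set F : V → V → A := fun u w =>
    if hu : u ∈ S then
      (if hw : w ∈ S then g0 ⟨u, Finset.mem_coe.mpr hu⟩ ⟨w, Finset.mem_coe.mpr hw⟩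
       else if w = v then - a u else 0)
    else if u = v then (if hw : w ∈ S then a w else 0) else 0
    with hF
  refine ⟨fun u w => F u.1 w.1, ?_, ?_, ?_⟩
  · -- antisymmetry
    rintro ⟨u, hu⟩ ⟨w, hw⟩
    simp only
    by_cases h1 : u ∈ S <;> by_cases h2 : w ∈ S
    · simp only [hF, dif_pos h1, dif_pos h2]; exact hg0a _ _
    · have hwv : w = v := (Finset.mem_insert.mp (Finset.mem_coe.mp hw)).resolve_right h2
      subst hwv
      simp [hF, h1, hv]
    · have huv : u = v := (Finset.mem_insert.mp (Finset.mem_coe.mp hu)).resolve_right h1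
      subst huv
      simp [hF, hv, h2]
    · have huv : u = v := (Finset.mem_insert.mp (Finset.mem_coe.mp hu)).resolve_right h1
      have hwv : w = v := (Finset.mem_insert.mp (Finset.mem_coe.mp hw)).resolve_right h2
      subst huv; subst hwv
      simp [hF, hv]
  · -- edges
    rintro ⟨u, hu⟩ ⟨w, hw⟩
    simp only [SimpleGraph.comap_adj, Function.Embedding.coe_subtype]
    by_cases h1 : u ∈ S <;> by_cases h2 : w ∈ S
    · simp only [hF, dif_pos h1, dif_pos h2]
      exact hg0e ⟨u, Finset.mem_coe.mpr h1⟩ ⟨w, Finset.mem_coe.mpr h2⟩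
    · have hwv : w = v := (Finset.mem_insert.mp (Finset.mem_coe.mp hw)).resolve_right h2
      subst hwv
      have hFe : F u w = - a u := by simp [hF, h1, hv]
      rw [hFe, neg_ne_zero, ← ha_ne u, hN, Finset.mem_filter]
      constructor
      · intro h; exact ⟨h1, h.symm⟩
      · intro h; exact h.2.symm
    · have huv : u = v := (Finset.mem_insert.mp (Finset.mem_coe.mp hu)).resolve_right h1
      subst huv
      have hFe : F u w = a w := by simp [hF, hv, h2]
      rw [hFe, ← ha_ne w, hN, Finset.mem_filter]
      constructor
      · intro h; exact ⟨h2, h⟩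
      · intro h; exact h.2
    · have huv : u = v := (Finset.mem_insert.mp (Finset.mem_coe.mp hu)).resolve_right h1
      have hwv : w = v := (Finset.mem_insert.mp (Finset.mem_coe.mp hw)).resolve_right h2
      subst huv; subst hwv
      simp [hF, hv]
  · -- boundary
    rintro ⟨u, hu⟩
    have hsum : ∑ w : ((insert v S : Finset V) : Set V), F u w.1
        = ∑ w ∈ insert v S, F u w :=
      (Finset.sum_subtype (p := fun w => w ∈ ((insert v S : Finset V) : Set V))
        (insert v S) (fun w => Finset.mem_coe.symm) (F u)).symm
    simp only
    rw [hsum, Finset.sum_insert hv]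
    by_cases h1 : u ∈ S
    · have hFv : F u v = - a u := by simp [hF, h1, hv]
      have hFS : ∑ w ∈ S, F u w = B u + a u := by
        rw [Finset.sum_subtype (p := fun w => w ∈ (S : Set V)) S
          (fun w => Finset.mem_coe.symm) (F u)]
        have e2 : ∀ w : (S : Set V), F u w.1 = g0 ⟨u, Finset.mem_coe.mpr h1⟩ w := by
          intro w
          simp [hF, h1, Finset.mem_coe.mp w.2]
        rw [Finset.sum_congr rfl (fun w _ => e2 w)]
        exact hg0b ⟨u, Finset.mem_coe.mpr h1⟩
      have hBu : B u = b ⟨u, hu⟩ := by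
        rw [hB]
        simp only [dif_pos (Finset.mem_insert_of_mem h1)]
      rw [hFv, hFS, ← hBu]
      abel
    · have huv : u = v := (Finset.mem_insert.mp (Finset.mem_coe.mp hu)).resolve_right h1
      subst huv
      have hFv : F u u = 0 := by simp [hF, h1]
      have hFS : ∑ w ∈ S, F u w = ∑ w ∈ S, a w := by
        refine Finset.sum_congr rfl fun w hw => ?_
        simp [hF, h1, hw]
      rw [hFv, hFS, haSum, zero_add]
      simp [hB]
end

section
/- Let A be an abelian group with |A| ≥ 3, and let G be a finite simple graph with vertices u, v, w such that uv, uw ∈ E(G), v ≠ w, vw ∉ E(G), and the degree of u in G is at least 4. Let G_{[uv,uw]} denote the graph obtained from G by deleting the edges uv and uw and adding the edge vw. If G_{[uv,uw]} is A-connected, then G is A-connected. -/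
open Finset

/-- single oriented-edge flow from `p` to `q` with value `c`. -/
def edgeFlow {V : Type} [DecidableEq V] {A : Type} [AddCommGroup A]
    (p q : V) (c : A) (x y : V) : A :=
  if x = p ∧ y = q then c else if x = q ∧ y = p then -c else 0

lemma edgeFlow_skew {V : Type} [DecidableEq V] {A : Type} [AddCommGroup A]
    (p q : V) (hpq : p ≠ q) (c : A) (x y : V) :
    edgeFlow p q c x y = - edgeFlow p q c y x := by
  unfold edgeFlow
  by_cases h1 : x = p ∧ y = q
  · rw [if_pos h1, if_neg (fun hc : y = p ∧ x = q => hpq (h1.1.symm.trans hc.2)),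
      if_pos ⟨h1.2, h1.1⟩, neg_neg]
  · by_cases h2 : x = q ∧ y = p
    · rw [if_neg h1, if_pos h2, if_pos ⟨h2.2, h2.1⟩]
    · rw [if_neg h1, if_neg h2,
        if_neg (fun hc : y = p ∧ x = q => h2 ⟨hc.2, hc.1⟩),
        if_neg (fun hc : y = q ∧ x = p => h1 ⟨hc.2, hc.1⟩), neg_zero]

lemma edgeFlow_zero {V : Type} [DecidableEq V] {A : Type} [AddCommGroup A]
    (p q : V) (c : A) (x y : V) (h1 : ¬(x = p ∧ y = q)) (h2 : ¬(x = q ∧ y = p)) :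
    edgeFlow p q c x y = 0 := by
  unfold edgeFlow
  rw [if_neg h1, if_neg h2]

lemma edgeFlow_sum {V : Type} [Fintype V] [DecidableEq V] {A : Type} [AddCommGroup A]
    (p q : V) (hpq : p ≠ q) (c : A) (x : V) :
    ∑ y, edgeFlow p q c x y = if x = p then c else if x = q then -c else 0 := by
  by_cases hx : x = p
  · have : ∀ y, edgeFlow p q c x y = if y = q then c else 0 := by
      intro y; unfold edgeFlow; simp [hx, hpq]
    rw [Finset.sum_congr rfl (fun y _ => this y)]
    simp [hx]
  · by_cases hx' : x = q
    · have : ∀ y, edgeFlow p q c x y = if y = p then -c else 0 := by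
        intro y; unfold edgeFlow; simp [hx, hx', Ne.symm hpq]
      rw [Finset.sum_congr rfl (fun y _ => this y)]
      simp [hx, hx', Ne.symm hpq]
    · have : ∀ y, edgeFlow p q c x y = 0 := by
        intro y; unfold edgeFlow; simp [hx, hx']
      rw [Finset.sum_congr rfl (fun y _ => this y)]
      simp [hx, hx']

set_option maxHeartbeats 1600000 in
theorem stmt_12 {V : Type} [Fintype V] (G : SimpleGraph V) [DecidableRel G.Adj]
    (A : Type) [AddCommGroup A] (hA : 3 ≤ Cardinal.mk A)
    (u v w : V) (huv : G.Adj u v) (huw : G.Adj u w) (hvw : v ≠ w)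
    (hnadj : ¬ G.Adj v w) (hdeg : 4 ≤ G.degree u)
    (h : (SimpleGraph.fromEdgeSet
        ((G.edgeSet \ {s(u, v), s(u, w)}) ∪ {s(v, w)})).AConnected A) :
    G.AConnected A := by
  classical
  intro b hb
  obtain ⟨f', hf1, hf2, hf3⟩ := h b hb
  have hunev : u ≠ v := huv.ne
  have hunew : u ≠ w := huw.ne
  have hveu : v ≠ u := hunev.symm
  have hweu : w ≠ u := hunew.symm
  have hwev : w ≠ v := hvw.symm
  have hGvw : (SimpleGraph.fromEdgeSet
      ((G.edgeSet \ {s(u, v), s(u, w)}) ∪ {s(v, w)})).Adj v w := by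
    rw [SimpleGraph.fromEdgeSet_adj]
    exact ⟨Set.mem_union_right _ rfl, hvw⟩
  obtain ⟨a, ha_def⟩ : ∃ a, f' v w = a := ⟨_, rfl⟩
  have ha : a ≠ 0 := ha_def ▸ (hf2 v w).mp hGvw
  have hvu0 : f' v u = 0 := by
    by_contra h0
    have hadj := (hf2 v u).mpr h0
    rw [SimpleGraph.fromEdgeSet_adj] at hadj
    rcases hadj.1 with h1 | h1
    · exact h1.2 (Set.mem_insert_iff.mpr (Or.inl Sym2.eq_swap))
    · simp only [Set.mem_singleton_iff, Sym2.eq_iff] at h1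
      tauto
  have huw0 : f' u w = 0 := by
    by_contra h0
    have hadj := (hf2 u w).mpr h0
    rw [SimpleGraph.fromEdgeSet_adj] at hadj
    rcases hadj.1 with h1 | h1
    · exact h1.2 (Set.mem_insert_iff.mpr (Or.inr rfl))
    · simp only [Set.mem_singleton_iff, Sym2.eq_iff] at h1
      tauto
  have huv0 : f' u v = 0 := by rw [hf1, hvu0, neg_zero]
  have hwu0 : f' w u = 0 := by rw [hf1, huw0, neg_zero]
  have hwv : f' w v = - a := by rw [hf1, ha_def]
  refine ⟨fun x y => f' x y + edgeFlow v u a x y + edgeFlow u w a x y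
      + edgeFlow w v a x y, ?_, ?_, ?_⟩
  · intro x y
    show f' x y + edgeFlow v u a x y + edgeFlow u w a x y + edgeFlow w v a x y
      = -(f' y x + edgeFlow v u a y x + edgeFlow u w a y x + edgeFlow w v a y x)
    rw [hf1 x y, edgeFlow_skew v u hveu a x y, edgeFlow_skew u w hunew a x y,
      edgeFlow_skew w v hwev a x y]
    abel
  · intro x y
    show G.Adj x y ↔ f' x y + edgeFlow v u a x y + edgeFlow u w a x y
      + edgeFlow w v a x y ≠ 0
    by_cases h1 : x = v ∧ y = w
    · rw [h1.1, h1.2]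
      have hval : f' v w + edgeFlow v u a v w + edgeFlow u w a v w
          + edgeFlow w v a v w = 0 := by
        simp [edgeFlow, hvw, hveu, hweu, hwev, hunev, hunew, ha_def]
      rw [hval]
      exact iff_of_false hnadj (by simp)
    by_cases h2 : x = w ∧ y = v
    · rw [h2.1, h2.2]
      have hval : f' w v + edgeFlow v u a w v + edgeFlow u w a w v
          + edgeFlow w v a w v = 0 := by
        simp [edgeFlow, hvw, hveu, hweu, hwev, hunev, hunew, hwv]
      rw [hval]
      exact iff_of_false (fun hc => hnadj hc.symm) (by simp)
    by_cases h3 : x = v ∧ y = u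
    · rw [h3.1, h3.2]
      have hval : f' v u + edgeFlow v u a v u + edgeFlow u w a v u
          + edgeFlow w v a v u = a := by
        simp [edgeFlow, hvw, hveu, hweu, hwev, hunev, hunew, hvu0]
      rw [hval]
      exact iff_of_true huv.symm ha
    by_cases h4 : x = u ∧ y = v
    · rw [h4.1, h4.2]
      have hval : f' u v + edgeFlow v u a u v + edgeFlow u w a u v
          + edgeFlow w v a u v = -a := by
        simp [edgeFlow, hvw, hveu, hweu, hwev, hunev, hunew, huv0]
      rw [hval]
      exact iff_of_true huv (neg_ne_zero.mpr ha)
    by_cases h5 : x = u ∧ y = w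
    · rw [h5.1, h5.2]
      have hval : f' u w + edgeFlow v u a u w + edgeFlow u w a u w
          + edgeFlow w v a u w = a := by
        simp [edgeFlow, hvw, hveu, hweu, hwev, hunev, hunew, huw0]
      rw [hval]
      exact iff_of_true huw ha
    by_cases h6 : x = w ∧ y = u
    · rw [h6.1, h6.2]
      have hval : f' w u + edgeFlow v u a w u + edgeFlow u w a w u
          + edgeFlow w v a w u = -a := by
        simp [edgeFlow, hvw, hveu, hweu, hwev, hunev, hunew, hwu0]
      rw [hval]
      exact iff_of_true huw.symm (neg_ne_zero.mpr ha)
    · rw [edgeFlow_zero v u a x y h3 h4, edgeFlow_zero u w a x y h5 h6,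
        edgeFlow_zero w v a x y h2 h1, add_zero, add_zero, add_zero,
        ← hf2 x y, SimpleGraph.fromEdgeSet_adj]
      constructor
      · intro hxy
        refine ⟨Or.inl ⟨hxy, ?_⟩, hxy.ne⟩
        simp only [Set.mem_insert_iff, Set.mem_singleton_iff, Sym2.eq_iff]
        tauto
      · rintro ⟨hm | hm, hne⟩
        · exact hm.1
        · simp only [Set.mem_singleton_iff, Sym2.eq_iff] at hm
          tauto
  · intro x
    show ∑ y, (f' x y + edgeFlow v u a x y + edgeFlow u w a x y
      + edgeFlow w v a x y) = b x
    rw [Finset.sum_add_distrib, Finset.sum_add_distrib, Finset.sum_add_distrib,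
      hf3 x, edgeFlow_sum v u hveu a x, edgeFlow_sum u w hunew a x,
      edgeFlow_sum w v hwev a x]
    by_cases hx1 : x = v
    · simp [hx1, hveu, hvw, hwev]
    by_cases hx2 : x = u
    · simp [hx1, hx2, hunev, hunew]
    by_cases hx3 : x = w
    · simp [hx1, hx2, hx3, hweu, hwev]
    · simp [hx1, hx2, hx3]
end

section
/- Every 3-edge-connected simple graph on exactly 5 vertices with independence number α(G) ≤ 2 is Z₃-connected. -/
open Finset

/-- `G` is 3-edge-connected: every nonempty proper vertex subset `S` is joined to its
complement by at least 3 edges. -/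
def SimpleGraph.ThreeEdgeConnected {V : Type} [Fintype V] [DecidableEq V]
    (G : SimpleGraph V) [DecidableRel G.Adj] : Prop :=
  ∀ S : Finset V, S.Nonempty → S ≠ univ →
    3 ≤ ((S ×ˢ Sᶜ).filter fun p => G.Adj p.1 p.2).card


set_option maxRecDepth 10000
set_option linter.unreachableTactic false
set_option linter.unusedTactic false

def w3 (b : Bool) : ZMod 3 := if b then 1 else 2

def mkf (c : Fin 8 → Bool) : Fin 5 → Fin 5 → ZMod 3 := fun u v =>
  match u.1, v.1 with
  | 0, 2 => w3 (c 0) | 2, 0 => -w3 (c 0)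
  | 0, 3 => w3 (c 1) | 3, 0 => -w3 (c 1)
  | 0, 4 => w3 (c 2) | 4, 0 => -w3 (c 2)
  | 1, 2 => w3 (c 3) | 2, 1 => -w3 (c 3)
  | 1, 3 => w3 (c 4) | 3, 1 => -w3 (c 4)
  | 1, 4 => w3 (c 5) | 4, 1 => -w3 (c 5)
  | 2, 4 => w3 (c 6) | 4, 2 => -w3 (c 6)
  | 3, 4 => w3 (c 7) | 4, 3 => -w3 (c 7)
  | _, _ => 0

theorem mkf_anti : ∀ (c : Fin 8 → Bool) (u v : Fin 5), mkf c u v = - mkf c v u := by decide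
theorem mkf_supp : ∀ (c : Fin 8 → Bool) (u v : Fin 5), mkf c u v ≠ 0 ↔ mkf (fun _ => true) u v ≠ 0 := by decide
theorem W4_key : ∀ b : Fin 5 → ZMod 3, ∑ v, b v = 0 → ∃ c : Fin 8 → Bool, ∀ v, ∑ u, mkf c v u = b v := by decide


def W4 : SimpleGraph (Fin 5) where
  Adj u v := mkf (fun _ => true) u v ≠ 0
  symm := ⟨fun u v h => by have h' : mkf (fun _ => true) u v ≠ 0 := h; show mkf (fun _ => true) v u ≠ 0; rw [mkf_anti]; exact neg_ne_zero.mpr h'⟩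
  loopless := ⟨fun u => by fin_cases u <;> decide⟩

theorem W4_aconnected : W4.AConnected (ZMod 3) := by
  intro b hb
  obtain ⟨c, hc⟩ := W4_key b hb
  exact ⟨mkf c, mkf_anti c, fun u v => (mkf_supp c u v).symm, hc⟩

instance : DecidableRel W4.Adj :=
  fun u v => inferInstanceAs (Decidable (mkf (fun _ => true) u v ≠ 0))

theorem W4_adj_iff : ∀ u v : Fin 5, W4.Adj u v ↔
    (u ≠ v ∧ ¬(u = 0 ∧ v = 1) ∧ ¬(u = 1 ∧ v = 0) ∧ ¬(u = 2 ∧ v = 3) ∧ ¬(u = 3 ∧ v = 2)) := by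
  decide

theorem aconnected_of_equiv {V W : Type} [Fintype V] [Fintype W] {A : Type} [AddCommGroup A]
    (e : V ≃ W) (G : SimpleGraph V) (H : SimpleGraph W)
    (h : ∀ u v : V, H.Adj (e u) (e v) ↔ G.Adj u v)
    (hG : G.AConnected A) : H.AConnected A := by
  intro b hb
  obtain ⟨f, hf1, hf2, hf3⟩ := hG (fun v => b (e v)) ((Equiv.sum_comp e b).trans hb)
  refine ⟨fun u v => f (e.symm u) (e.symm v), fun u v => hf1 _ _, fun u v => ?_, fun v => ?_⟩
  · have h2 := h (e.symm u) (e.symm v)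
    simp only [Equiv.apply_symm_apply] at h2
    exact h2.trans (hf2 _ _)
  · calc ∑ u, f (e.symm v) (e.symm u) = ∑ x, f (e.symm v) x := Equiv.sum_comp e.symm _
      _ = b (e (e.symm v)) := hf3 _
      _ = b v := by rw [Equiv.apply_symm_apply]

/-- `K5` minus the edges `ab` and `cd`. -/
def KW {V : Type} (a b c d : V) : SimpleGraph V where
  Adj u v := u ≠ v ∧ ¬(u = a ∧ v = b) ∧ ¬(u = b ∧ v = a) ∧ ¬(u = c ∧ v = d) ∧ ¬(u = d ∧ v = c)
  symm := ⟨by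
    rintro u v ⟨h0, h1, h2, h3, h4⟩
    exact ⟨h0.symm, fun h => h2 ⟨h.2, h.1⟩, fun h => h1 ⟨h.2, h.1⟩,
      fun h => h4 ⟨h.2, h.1⟩, fun h => h3 ⟨h.2, h.1⟩⟩⟩
  loopless := ⟨fun u h => h.1 rfl⟩

/-- `K5` minus the edge `cd`. -/
def KWc {V : Type} (c d : V) : SimpleGraph V where
  Adj u v := u ≠ v ∧ ¬(u = c ∧ v = d) ∧ ¬(u = d ∧ v = c)
  symm := ⟨by
    rintro u v ⟨h0, h1, h2⟩
    exact ⟨h0.symm, fun h => h2 ⟨h.2, h.1⟩, fun h => h1 ⟨h.2, h.1⟩⟩⟩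
  loopless := ⟨fun u h => h.1 rfl⟩

theorem KW_aconnected {V : Type} [Fintype V] [DecidableEq V] (hcard : Fintype.card V = 5)
    (a b c d e : V) (hab : a ≠ b) (hac : a ≠ c) (had : a ≠ d) (hae : a ≠ e)
    (hbc : b ≠ c) (hbd : b ≠ d) (hbe : b ≠ e) (hcd : c ≠ d) (hce : c ≠ e) (hde : d ≠ e) :
    (KW a b c d).AConnected (ZMod 3) := by
  have hinj : Function.Injective (![a, b, c, d, e] : Fin 5 → V) := by
    intro i j hij
    fin_cases i <;> fin_cases j <;> simp_all <;>
      first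
        | rfl
        | exact absurd hij (by assumption)
        | exact absurd hij.symm (by assumption)
  have hbij : Function.Bijective (![a, b, c, d, e] : Fin 5 → V) :=
    (Fintype.bijective_iff_injective_and_card _).mpr ⟨hinj, by simp [hcard]⟩
  let m : Fin 5 ≃ V := Equiv.ofBijective _ hbij
  have hm : ∀ i : Fin 5, m i = ![a, b, c, d, e] i := fun _ => rfl
  refine aconnected_of_equiv m W4 (KW a b c d) ?_ W4_aconnected
  intro u v
  rw [W4_adj_iff]
  show ((m u ≠ m v) ∧ ¬(m u = a ∧ m v = b) ∧ ¬(m u = b ∧ m v = a) ∧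
    ¬(m u = c ∧ m v = d) ∧ ¬(m u = d ∧ m v = c)) ↔ _
  have h0 : a = m 0 := rfl
  have h1 : b = m 1 := rfl
  have h2 : c = m 2 := rfl
  have h3 : d = m 3 := rfl
  rw [h0, h1, h2, h3]
  simp [m.injective.eq_iff, m.injective.ne_iff]

theorem add_edge {V : Type} [Fintype V] [DecidableEq V]
    (H G : SimpleGraph V) (x y : V) (hxy : x ≠ y) (hna : ¬ H.Adj x y)
    (hadj : ∀ u v, G.Adj u v ↔ (H.Adj u v ∨ (u = x ∧ v = y) ∨ (u = y ∧ v = x)))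
    (hH : H.AConnected (ZMod 3)) : G.AConnected (ZMod 3) := by
  intro b hb
  set g : V → V → ZMod 3 := fun u v =>
    (if u = x ∧ v = y then 1 else 0) - (if u = y ∧ v = x then 1 else 0) with hgdef
  have hgsum : ∀ v, ∑ u, g v u = (if v = x then 1 else 0) - (if v = y then 1 else 0) := by
    intro v
    rw [Finset.sum_sub_distrib]
    congr 1
    · by_cases h : v = x <;> simp [g, h]
    · by_cases h : v = y <;> simp [g, h]
  obtain ⟨f, hf1, hf2, hf3⟩ := hH
      (fun v => b v - ((if v = x then 1 else 0) - (if v = y then 1 else 0)))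
      (by rw [Finset.sum_sub_distrib, hb, Finset.sum_sub_distrib]; simp [hxy])
  have hfxy : f x y = 0 := by
    by_contra hne; exact hna ((hf2 x y).mpr hne)
  have hfyx : f y x = 0 := by rw [hf1, hfxy, neg_zero]
  refine ⟨fun u v => f u v + g u v, fun u v => ?_, fun u v => ?_, fun v => ?_⟩
  · show f u v + g u v = -(f v u + g v u)
    rw [hf1 u v]
    by_cases h1 : u = x ∧ v = y <;> by_cases h2 : u = y ∧ v = x <;>
      simp [g, h1, h2, and_comm] <;> ring
  · show G.Adj u v ↔ f u v + g u v ≠ 0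
    rw [hadj]
    by_cases h1 : u = x ∧ v = y
    · have hne : ¬(u = y ∧ v = x) := fun h => hxy (h1.1.symm.trans h.1)
      have hguv : g u v = 1 := by
        simp [g, h1, hne]
        exact fun h => absurd h hxy
      have hfuv : f u v = 0 := by rw [h1.1, h1.2]; exact hfxy
      rw [hguv, hfuv, zero_add]
      exact ⟨fun _ => by decide, fun _ => Or.inr (Or.inl h1)⟩
    · by_cases h2 : u = y ∧ v = x
      · have hguv : g u v = -1 := by
          simp [g, h1, h2]
          exact fun h => absurd h.symm hxy
        have hfuv : f u v = 0 := by rw [h2.1, h2.2]; exact hfyx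
        rw [hguv, hfuv, zero_add]
        exact ⟨fun _ => by decide, fun _ => Or.inr (Or.inr h2)⟩
      · have hgz : g u v = 0 := by simp [g, h1, h2]
        rw [hgz, add_zero]
        simp [h1, h2, hf2 u v]
  · show ∑ u, (f v u + g v u) = b v
    rw [Finset.sum_add_distrib, hf3, hgsum]; ring

theorem aconnected_congr {V : Type} [Fintype V] {A : Type} [AddCommGroup A]
    (G H : SimpleGraph V) (h : ∀ u v, G.Adj u v ↔ H.Adj u v)
    (hH : H.AConnected A) : G.AConnected A := by
  intro b hb
  obtain ⟨f, h1, h2, h3⟩ := hH b hb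
  exact ⟨f, h1, fun u v => (h u v).trans (h2 u v), h3⟩

theorem toKW {V : Type} (G : SimpleGraph V) (a b c d e : V)
    (hmem : ∀ v : V, v = a ∨ v = b ∨ v = c ∨ v = d ∨ v = e)
    (hnab : ¬G.Adj a b) (hncd : ¬G.Adj c d)
    (fac : G.Adj a c) (fad : G.Adj a d) (fae : G.Adj a e)
    (fbc : G.Adj b c) (fbd : G.Adj b d) (fbe : G.Adj b e)
    (fce : G.Adj c e) (fde : G.Adj d e) :
    ∀ u v, G.Adj u v ↔ (KW a b c d).Adj u v := by
  have fca := fac.symm; have fda := fad.symm; have fea := fae.symm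
  have fcb := fbc.symm; have fdb := fbd.symm; have feb := fbe.symm
  have fec := fce.symm; have fed := fde.symm
  intro u v
  constructor
  · intro h
    refine ⟨G.ne_of_adj h, ?_, ?_, ?_, ?_⟩
    · rintro ⟨rfl, rfl⟩; exact hnab h
    · rintro ⟨rfl, rfl⟩; exact hnab h.symm
    · rintro ⟨rfl, rfl⟩; exact hncd h
    · rintro ⟨rfl, rfl⟩; exact hncd h.symm
  · rintro ⟨hne, n1, n2, n3, n4⟩
    rcases hmem u with rfl | rfl | rfl | rfl | rfl <;>
      rcases hmem v with rfl | rfl | rfl | rfl | rfl <;>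
        first
          | assumption
          | exact absurd rfl hne
          | tauto

theorem toKWplus {V : Type} (G : SimpleGraph V) (a b c d e : V)
    (hmem : ∀ v : V, v = a ∨ v = b ∨ v = c ∨ v = d ∨ v = e)
    (hnab : ¬G.Adj a b) (fcd : G.Adj c d)
    (fac : G.Adj a c) (fad : G.Adj a d) (fae : G.Adj a e)
    (fbc : G.Adj b c) (fbd : G.Adj b d) (fbe : G.Adj b e)
    (fce : G.Adj c e) (fde : G.Adj d e) :
    ∀ u v, G.Adj u v ↔ ((KW a b c d).Adj u v ∨ (u = c ∧ v = d) ∨ (u = d ∧ v = c)) := by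
  have fca := fac.symm; have fda := fad.symm; have fea := fae.symm
  have fcb := fbc.symm; have fdb := fbd.symm; have feb := fbe.symm
  have fec := fce.symm; have fed := fde.symm; have fdc := fcd.symm
  intro u v
  constructor
  · intro h
    by_cases h3 : u = c ∧ v = d
    · exact Or.inr (Or.inl h3)
    · by_cases h4 : u = d ∧ v = c
      · exact Or.inr (Or.inr h4)
      · refine Or.inl ⟨G.ne_of_adj h, ?_, ?_, h3, h4⟩
        · rintro ⟨rfl, rfl⟩; exact hnab h
        · rintro ⟨rfl, rfl⟩; exact hnab h.symm
  · rintro (⟨hne, n1, n2, n3, n4⟩ | ⟨rfl, rfl⟩ | ⟨rfl, rfl⟩)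
    · rcases hmem u with rfl | rfl | rfl | rfl | rfl <;>
        rcases hmem v with rfl | rfl | rfl | rfl | rfl <;>
          first
            | assumption
            | exact absurd rfl hne
            | tauto
    · exact fcd
    · exact fdc


theorem stmt_16 {V : Type} [Fintype V] [DecidableEq V] (G : SimpleGraph V)
    [DecidableRel G.Adj]
    (hcard : Fintype.card V = 5)
    (h3ec : G.ThreeEdgeConnected)
    (halpha : ∀ a b c : V, a ≠ b → b ≠ c → a ≠ c → G.Adj a b ∨ G.Adj b c ∨ G.Adj a c) :
    G.AConnected (ZMod 3) := by
  -- every vertex has at least 3 neighbours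
  have hdeg3 : ∀ v : V, 3 ≤ (univ.filter fun u => G.Adj v u).card := by
    intro v
    have hneu : ({v} : Finset V) ≠ univ := by
      intro h
      have h5 := congrArg Finset.card h
      rw [card_singleton, card_univ, hcard] at h5
      omega
    have h := h3ec {v} (singleton_nonempty v) hneu
    have key : ((({v} : Finset V) ×ˢ ({v} : Finset V)ᶜ).filter fun p => G.Adj p.1 p.2)
        = {v} ×ˢ (univ.filter fun u => G.Adj v u) := by
      ext ⟨p, q⟩
      simp only [mem_filter, mem_product, mem_singleton, mem_compl, mem_univ, true_and]
      constructor
      · rintro ⟨⟨rfl, _⟩, h3⟩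
        exact ⟨rfl, h3⟩
      · rintro ⟨rfl, h3⟩
        exact ⟨⟨rfl, (G.ne_of_adj h3).symm⟩, h3⟩
    rw [key, card_product, card_singleton, one_mul] at h
    exact h
  -- each vertex has at most one non-neighbour
  have hunique : ∀ v u w : V, ¬G.Adj v u → ¬G.Adj v w → u ≠ v → w ≠ v → u = w := by
    intro v u w h1 h2 h3 h4
    by_contra hne
    have hsub : (univ.filter fun x => G.Adj v x) ⊆ univ \ {v, u, w} := by
      intro x hx
      rw [mem_filter] at hx
      rw [mem_sdiff]
      refine ⟨mem_univ x, ?_⟩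
      simp only [mem_insert, mem_singleton]
      push_neg
      refine ⟨?_, ?_, ?_⟩
      · rintro rfl; exact G.loopless.irrefl _ hx.2
      · rintro rfl; exact h1 hx.2
      · rintro rfl; exact h2 hx.2
    have hc1 := card_le_card hsub
    have hc2 : ({v, u, w} : Finset V).card = 3 := by
      rw [card_insert_of_notMem, card_insert_of_notMem, card_singleton]
      · simp only [mem_singleton]; exact hne
      · simp only [mem_insert, mem_singleton]
        push_neg
        exact ⟨Ne.symm h3, Ne.symm h4⟩
    have hc3 : (univ \ {v, u, w}).card = 2 := by
      rw [card_sdiff_of_subset (subset_univ _), card_univ, hcard, hc2]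
    have := hdeg3 v
    omega
  by_cases hK : ∀ u v : V, u ≠ v → G.Adj u v
  · -- G is complete
    let m : Fin 5 ≃ V := (Fintype.equivFinOfCardEq hcard).symm
    have hnem : ∀ i j : Fin 5, i ≠ j → m i ≠ m j := fun i j hij h => hij (m.injective h)
    set a := m 0 with ha; set b := m 1 with hb; set c := m 2 with hc
    set d := m 3 with hd; set e := m 4 with he
    have hab := hnem 0 1 (by decide); have hac := hnem 0 2 (by decide)
    have had := hnem 0 3 (by decide); have hae := hnem 0 4 (by decide)
    have hbc := hnem 1 2 (by decide); have hbd := hnem 1 3 (by decide)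
    have hbe := hnem 1 4 (by decide); have hcd := hnem 2 3 (by decide)
    have hce := hnem 2 4 (by decide); have hde := hnem 3 4 (by decide)
    have step1 : (KWc c d : SimpleGraph V).AConnected (ZMod 3) := by
      apply add_edge (KW a b c d) (KWc c d) a b hab
      · rintro ⟨_, h2, _⟩; exact h2 ⟨rfl, rfl⟩
      · intro u v
        constructor
        · rintro ⟨hne', n3, n4⟩
          by_cases hp : u = a ∧ v = b
          · exact Or.inr (Or.inl hp)
          · by_cases hq : u = b ∧ v = a
            · exact Or.inr (Or.inr hq)
            · exact Or.inl ⟨hne', hp, hq, n3, n4⟩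
        · rintro (⟨hne', _, _, n3, n4⟩ | ⟨rfl, rfl⟩ | ⟨rfl, rfl⟩)
          · exact ⟨hne', n3, n4⟩
          · exact ⟨hab, fun h => hac h.1, fun h => had h.1⟩
          · exact ⟨Ne.symm hab, fun h => hbc h.1, fun h => hbd h.1⟩
      · exact KW_aconnected hcard a b c d e hab hac had hae hbc hbd hbe hcd hce hde
    apply add_edge (KWc c d) G c d hcd
    · rintro ⟨_, h2, _⟩; exact h2 ⟨rfl, rfl⟩
    · intro u v
      constructor
      · intro h
        by_cases hp : u = c ∧ v = d
        · exact Or.inr (Or.inl hp)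
        · by_cases hq : u = d ∧ v = c
          · exact Or.inr (Or.inr hq)
          · exact Or.inl ⟨G.ne_of_adj h, hp, hq⟩
      · rintro (⟨hne', _, _⟩ | ⟨rfl, rfl⟩ | ⟨rfl, rfl⟩)
        · exact hK _ _ hne'
        · exact hK _ _ hcd
        · exact hK _ _ (Ne.symm hcd)
    · exact step1
  · -- G has a non-edge {a, b}
    push_neg at hK
    obtain ⟨a, b, hab, hnab⟩ := hK
    have hnba : ¬G.Adj b a := fun h => hnab h.symm
    have hR : (univ \ {a, b} : Finset V).card = 3 := by
      rw [card_sdiff_of_subset (subset_univ _), card_univ, hcard,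
        card_insert_of_notMem (by simp only [mem_singleton]; exact hab), card_singleton]
    obtain ⟨x, y, z, hxy', hxz', hyz', hRxyz⟩ := Finset.card_eq_three.mp hR
    have hxmem : x ∈ univ \ ({a, b} : Finset V) := by rw [hRxyz]; simp
    have hymem : y ∈ univ \ ({a, b} : Finset V) := by rw [hRxyz]; simp
    have hzmem : z ∈ univ \ ({a, b} : Finset V) := by rw [hRxyz]; simp
    rw [mem_sdiff, mem_insert, mem_singleton] at hxmem hymem hzmem
    push_neg at hxmem hymem hzmem
    obtain ⟨-, hxa, hxb⟩ := hxmem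
    obtain ⟨-, hya, hyb⟩ := hymem
    obtain ⟨-, hza, hzb⟩ := hzmem
    have hmem : ∀ v : V, v = a ∨ v = b ∨ v = x ∨ v = y ∨ v = z := by
      intro v
      by_cases h1 : v = a
      · tauto
      by_cases h2 : v = b
      · tauto
      have hv : v ∈ univ \ ({a, b} : Finset V) := by
        rw [mem_sdiff, mem_insert, mem_singleton]
        push_neg
        exact ⟨mem_univ v, h1, h2⟩
      rw [hRxyz, mem_insert, mem_insert, mem_singleton] at hv
      tauto
    have hax : G.Adj a x := by
      by_contra h
      exact hxb (hunique a b x hnab h (Ne.symm hab) hxa).symm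
    have hay : G.Adj a y := by
      by_contra h
      exact hyb (hunique a b y hnab h (Ne.symm hab) hya).symm
    have haz : G.Adj a z := by
      by_contra h
      exact hzb (hunique a b z hnab h (Ne.symm hab) hza).symm
    have hbx : G.Adj b x := by
      by_contra h
      exact hxa (hunique b a x hnba h hab hxb).symm
    have hby : G.Adj b y := by
      by_contra h
      exact hya (hunique b a y hnba h hab hyb).symm
    have hbz : G.Adj b z := by
      by_contra h
      exact hza (hunique b a z hnba h hab hzb).symm
    by_cases hxyA : G.Adj x y
    · by_cases hxzA : G.Adj x z
      · by_cases hyzA : G.Adj y z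
        · -- only non-edge is ab : G = KW a b x y plus edge xy
          apply add_edge (KW a b x y) G x y hxy'
          · rintro ⟨_, _, _, h3, _⟩; exact h3 ⟨rfl, rfl⟩
          · exact toKWplus G a b x y z hmem hnab hxyA hax hay haz hbx hby hbz hxzA hyzA
          · exact KW_aconnected hcard a b x y z hab (Ne.symm hxa) (Ne.symm hya)
              (Ne.symm hza) (Ne.symm hxb) (Ne.symm hyb) (Ne.symm hzb) hxy' hxz' hyz'
        · -- non-edges ab and yz
          have hmem' : ∀ v : V, v = a ∨ v = b ∨ v = y ∨ v = z ∨ v = x := by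
            intro v; rcases hmem v with h | h | h | h | h <;> tauto
          refine aconnected_congr G (KW a b y z)
            (toKW G a b y z x hmem' hnab hyzA hay haz hax hby hbz hbx hxyA.symm hxzA.symm)
            (KW_aconnected hcard a b y z x hab (Ne.symm hya) (Ne.symm hza) (Ne.symm hxa)
              (Ne.symm hyb) (Ne.symm hzb) (Ne.symm hxb) hyz' (Ne.symm hxy') (Ne.symm hxz'))
      · -- ¬ Adj x z : then Adj y z, non-edges ab and xz
        have hyzA : G.Adj y z := by
          by_contra h
          exact hxy' (hunique z x y (fun hh => hxzA hh.symm) (fun hh => h hh.symm)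
            hxz' hyz')
        have hmem'' : ∀ v : V, v = a ∨ v = b ∨ v = x ∨ v = z ∨ v = y := by
          intro v; rcases hmem v with h | h | h | h | h <;> tauto
        refine aconnected_congr G (KW a b x z)
          (toKW G a b x z y hmem'' hnab hxzA hax haz hay hbx hbz hby hxyA hyzA.symm)
          (KW_aconnected hcard a b x z y hab (Ne.symm hxa) (Ne.symm hza) (Ne.symm hya)
            (Ne.symm hxb) (Ne.symm hzb) (Ne.symm hyb) hxz' hxy' (Ne.symm hyz'))
    · -- ¬ Adj x y : then Adj x z and Adj y z, non-edges ab and xy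
      have hxzA : G.Adj x z := by
        by_contra h
        exact hyz' (hunique x y z hxyA h (Ne.symm hxy') (Ne.symm hxz'))
      have hyzA : G.Adj y z := by
        by_contra h
        exact hxz' (hunique y x z (fun hh => hxyA hh.symm) h hxy' (Ne.symm hyz'))
      refine aconnected_congr G (KW a b x y)
        (toKW G a b x y z hmem hnab hxyA hax hay haz hbx hby hbz hxzA hyzA)
        (KW_aconnected hcard a b x y z hab (Ne.symm hxa) (Ne.symm hya) (Ne.symm hza)
          (Ne.symm hxb) (Ne.symm hyb) (Ne.symm hzb) hxy' hxz' hyz')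
end

section
/- Let G be a finite simple graph with independence number α(G) ≤ 2 and minimum degree δ(G) ≥ 4, and suppose there exist two nonadjacent vertices x, y of G with N(x) ∩ N(y) = ∅. If G is 3-edge-connected, then G is Z₃-connected. -/
open Finset

namespace StmtAux17

variable {V : Type} [Fintype V] [DecidableEq V]

def pr (p q : V) (c : ZMod 3) : V → V → ZMod 3 := fun u v =>
  (if u = p ∧ v = q then c else 0) + (if u = q ∧ v = p then -c else 0)

lemma pr_anti (p q : V) (c : ZMod 3) (u v : V) : pr p q c u v = - pr p q c v u := by
  unfold pr
  by_cases hA : u = p ∧ v = q <;> by_cases hB : u = q ∧ v = p <;>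
    by_cases hC : v = p ∧ u = q <;> by_cases hD : v = q ∧ u = p
  all_goals simp [hA, hB, hC, hD]
  all_goals try split_ifs
  all_goals try ring
  all_goals tauto

lemma pr_row (p q : V) (c : ZMod 3) (v : V) :
    ∑ u, pr p q c v u = (if v = p then c else 0) + (if v = q then -c else 0) := by
  unfold pr
  rw [Finset.sum_add_distrib]
  congr 1
  · by_cases h : v = p <;> simp [h]
  · by_cases h : v = q <;> simp [h]

def spk (R : Finset V) (h : V) (a : V → ZMod 3) : V → V → ZMod 3 := fun u v =>
  (if u ∈ R ∧ v = h then a u else 0) + (if u = h ∧ v ∈ R then -(a v) else 0)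

lemma spk_anti (R : Finset V) (h : V) (a : V → ZMod 3) (u v : V) :
    spk R h a u v = - spk R h a v u := by
  unfold spk
  by_cases hA : u ∈ R ∧ v = h <;> by_cases hB : u = h ∧ v ∈ R <;>
    by_cases hC : v ∈ R ∧ u = h <;> by_cases hD : v = h ∧ u ∈ R
  all_goals simp [hA, hB, hC, hD]
  all_goals try split_ifs
  all_goals try ring
  all_goals tauto

lemma spk_row (R : Finset V) (h : V) (a : V → ZMod 3) (v : V) :
    ∑ u, spk R h a v u =
      (if v ∈ R then a v else 0) + (if v = h then -∑ w ∈ R, a w else 0) := by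
  unfold spk
  rw [Finset.sum_add_distrib]
  congr 1
  · by_cases h1 : v ∈ R <;> simp [h1]
  · by_cases h2 : v = h <;> simp [h2, Finset.sum_ite_mem]

def inn (R : Finset V) (ord : V → ℕ) : V → V → ZMod 3 := fun u v =>
  if u ∈ R ∧ v ∈ R ∧ u ≠ v then (if ord u < ord v then 1 else -1) else 0

lemma inn_anti (R : Finset V) (ord : V → ℕ) (hord : Function.Injective ord) (u v : V) :
    inn R ord u v = - inn R ord v u := by
  unfold inn
  by_cases h : u ∈ R ∧ v ∈ R ∧ u ≠ v
  · have h' : v ∈ R ∧ u ∈ R ∧ v ≠ u := ⟨h.2.1, h.1, h.2.2.symm⟩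
    rw [if_pos h, if_pos h']
    rcases lt_trichotomy (ord u) (ord v) with hlt | heq | hgt
    · rw [if_pos hlt, if_neg (by omega)]; norm_num
    · exact absurd (hord heq) h.2.2
    · rw [if_neg (by omega), if_pos hgt]
  · have h' : ¬ (v ∈ R ∧ u ∈ R ∧ v ≠ u) := by tauto
    rw [if_neg h, if_neg h', neg_zero]

lemma zmod3_double (x : ZMod 3) (h : x + x = 0) : x = 0 := by revert h; revert x; decide

lemma inn_row_not_mem (R : Finset V) (ord : V → ℕ) (v : V) (hv : v ∉ R) :
    ∑ u, inn R ord v u = 0 := by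
  apply Finset.sum_eq_zero
  intro u _
  simp [inn, hv]

lemma inn_sum_rows (R : Finset V) (ord : V → ℕ) (hord : Function.Injective ord) :
    ∑ v ∈ R, ∑ u, inn R ord v u = 0 := by
  have hext : ∑ v ∈ R, ∑ u, inn R ord v u = ∑ v, ∑ u, inn R ord v u := by
    apply Finset.sum_subset (Finset.subset_univ R)
    intro v _ hv
    exact inn_row_not_mem R ord v hv
  rw [hext]
  apply zmod3_double
  nth_rewrite 2 [Finset.sum_comm]
  rw [← Finset.sum_add_distrib]
  apply Finset.sum_eq_zero; intro v _
  rw [← Finset.sum_add_distrib]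
  apply Finset.sum_eq_zero; intro u _
  rw [inn_anti R ord hord u v]; ring

lemma key_arith : ∀ β1 β2 γ1 γ2 : ZMod 3, ∃ a1 c1 a2 c2 e : ZMod 3,
    a1 ≠ 0 ∧ c1 ≠ 0 ∧ β1 - a1 - c1 ≠ 0 ∧ a2 ≠ 0 ∧ c2 ≠ 0 ∧ β2 - a2 - c2 ≠ 0 ∧
    e ≠ 0 ∧ γ1 + a1 + a2 - e ≠ 0 ∧ γ2 + c1 + c2 + e ≠ 0 := by decide

lemma clique_flow (S : Finset V) (h5 : 5 ≤ S.card) (b : V → ZMod 3)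
    (hb0 : ∑ v ∈ S, b v = 0) (hbz : ∀ v, v ∉ S → b v = 0) :
    ∃ f : V → V → ZMod 3, (∀ u v, f u v = - f v u) ∧
      (∀ u v, f u v ≠ 0 ↔ (u ∈ S ∧ v ∈ S ∧ u ≠ v)) ∧
      (∀ v, ∑ u, f v u = b v) := by
  -- extract five distinct vertices
  obtain ⟨v1, hv1⟩ : S.Nonempty := Finset.card_pos.mp (by omega)
  have hc1 : 4 ≤ (S.erase v1).card := by
    rw [Finset.card_erase_of_mem hv1]; omega
  obtain ⟨v2, hv2⟩ : (S.erase v1).Nonempty := Finset.card_pos.mp (by omega)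
  have hc2 : 3 ≤ ((S.erase v1).erase v2).card := by
    rw [Finset.card_erase_of_mem hv2]; omega
  obtain ⟨v3, hv3⟩ : ((S.erase v1).erase v2).Nonempty := Finset.card_pos.mp (by omega)
  set R : Finset V := ((S.erase v1).erase v2).erase v3 with hR
  have hcR : 2 ≤ R.card := by
    rw [hR, Finset.card_erase_of_mem hv3]; omega
  obtain ⟨w1, hw1⟩ : R.Nonempty := Finset.card_pos.mp (by omega)
  have hcR' : 1 ≤ (R.erase w1).card := by
    rw [Finset.card_erase_of_mem hw1]; omega
  obtain ⟨w2, hw2'⟩ : (R.erase w1).Nonempty := Finset.card_pos.mp (by omega)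
  have hw2 : w2 ∈ R := Finset.mem_of_mem_erase hw2'
  have hw21 : w2 ≠ w1 := Finset.ne_of_mem_erase hw2'
  -- basic membership facts
  have hv2S : v2 ∈ S := Finset.mem_of_mem_erase hv2
  have hv3S : v3 ∈ S := Finset.mem_of_mem_erase (Finset.mem_of_mem_erase hv3)
  have h21 : v2 ≠ v1 := Finset.ne_of_mem_erase hv2
  have h32 : v3 ≠ v2 := Finset.ne_of_mem_erase hv3
  have h31 : v3 ≠ v1 := Finset.ne_of_mem_erase (Finset.mem_of_mem_erase hv3)
  have hRS : R ⊆ S := fun w hw =>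
    Finset.mem_of_mem_erase (Finset.mem_of_mem_erase (Finset.mem_of_mem_erase hw))
  have hv1R : v1 ∉ R := fun h => (Finset.mem_erase.mp
    (Finset.mem_of_mem_erase (Finset.mem_of_mem_erase h))).1 rfl
  have hv2R : v2 ∉ R := fun h => (Finset.mem_erase.mp (Finset.mem_of_mem_erase h)).1 rfl
  have hv3R : v3 ∉ R := Finset.notMem_erase v3 _
  have hmemS : ∀ v, v ∈ S ↔ v = v1 ∨ v = v2 ∨ v = v3 ∨ v ∈ R := by
    intro v
    constructor
    · intro hv
      by_cases e1 : v = v1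
      · exact Or.inl e1
      by_cases e2 : v = v2
      · exact Or.inr (Or.inl e2)
      by_cases e3 : v = v3
      · exact Or.inr (Or.inr (Or.inl e3))
      exact Or.inr (Or.inr (Or.inr (by
        rw [hR]
        exact Finset.mem_erase.mpr ⟨e3, Finset.mem_erase.mpr ⟨e2, Finset.mem_erase.mpr ⟨e1, hv⟩⟩⟩)))
    · rintro (rfl | rfl | rfl | hv)
      · exact hv1
      · exact hv2S
      · exact hv3S
      · exact hRS hv
  have hwR : ∀ w ∈ R, w ≠ v1 ∧ w ≠ v2 ∧ w ≠ v3 := by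
    intro w hw
    exact ⟨fun h => hv1R (h ▸ hw), fun h => hv2R (h ▸ hw), fun h => hv3R (h ▸ hw)⟩
  -- the data
  set ord : V → ℕ := fun v => ((Fintype.equivFin V) v : ℕ) with hord
  have hordinj : Function.Injective ord := by
    intro u v huv
    exact (Fintype.equivFin V).injective (Fin.ext huv)
  set σ : V → ZMod 3 := fun v => ∑ u, inn R ord v u with hσ
  set β : V → ZMod 3 := fun w => b w - σ w with hβ
  set Rc : Finset V := (R.erase w1).erase w2 with hRc
  set c0 : V → ZMod 3 := fun w => if β w = 2 then 2 else 1 with hc0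
  set γ1 : ZMod 3 := b v1 + (Rc.card : ZMod 3) with hγ1
  set γ2 : ZMod 3 := b v2 + ∑ w ∈ Rc, c0 w with hγ2
  obtain ⟨a1, cc1, a2, cc2, e, ha1, hcc1, hd1, ha2, hcc2, hd2, he, he13, he23⟩ :=
    key_arith (β w1) (β w2) γ1 γ2
  set a : V → ZMod 3 := fun w => if w = w1 then a1 else if w = w2 then a2 else 1 with ha
  set c : V → ZMod 3 := fun w => if w = w1 then cc1 else if w = w2 then cc2 else c0 w with hc
  set d : V → ZMod 3 := fun w => β w - a w - c w with hd
  set e12 : ZMod 3 := e with he12d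
  set e13 : ZMod 3 := γ1 + a1 + a2 - e with he13d
  set e23 : ZMod 3 := γ2 + cc1 + cc2 + e with he23d
  -- nonzeroness
  have haz : ∀ w, a w ≠ 0 := by
    intro w
    rw [ha]
    by_cases h1 : w = w1
    · simpa [h1] using ha1
    by_cases h2 : w = w2
    · simpa [h1, h2, hw21] using ha2
    · simp [h1, h2]
  have hcz : ∀ w, c w ≠ 0 := by
    intro w
    rw [hc]
    by_cases h1 : w = w1
    · simpa [h1] using hcc1
    by_cases h2 : w = w2
    · simpa [h1, h2, hw21] using hcc2
    · simp only [h1, h2, if_false, hc0]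
      by_cases h3 : β w = 2 <;> simp [h3] <;> decide
  have hdz : ∀ w, d w ≠ 0 := by
    intro w
    rw [hd]
    by_cases h1 : w = w1
    · subst h1; simpa [ha, hc] using hd1
    by_cases h2 : w = w2
    · subst h2; simpa [ha, hc, h1] using hd2
    · simp only [ha, hc, h1, h2, if_false, hc0]
      by_cases h3 : β w = 2
      · rw [h3]; decide
      · intro hcon
        apply h3
        have : β w - 1 - 1 = 0 := by simpa [h3] using hcon
        have h4 : β w = 2 := by linear_combination this
        exact h4
  -- sums over R
  have hRsplit : ∀ g : V → ZMod 3, ∑ w ∈ R, g w = g w1 + g w2 + ∑ w ∈ Rc, g w := by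
    intro g
    rw [← Finset.add_sum_erase R g hw1, ← Finset.add_sum_erase (R.erase w1) g hw2', ← hRc, add_assoc]
  have hRcw : ∀ w ∈ Rc, w ≠ w1 ∧ w ≠ w2 := by
    intro w hw
    have h1 := Finset.ne_of_mem_erase hw
    have h2 := Finset.ne_of_mem_erase (Finset.mem_of_mem_erase hw)
    exact ⟨h2, h1⟩
  have hSa : ∑ w ∈ R, a w = a1 + a2 + (Rc.card : ZMod 3) := by
    rw [hRsplit a]
    have e1 : a w1 = a1 := by simp [ha]
    have e2 : a w2 = a2 := by simp [ha, hw21]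
    have e3 : ∑ w ∈ Rc, a w = (Rc.card : ZMod 3) := by
      have hone : ∀ w ∈ Rc, a w = 1 := fun w hw => by
        simp [ha, (hRcw w hw).1, (hRcw w hw).2]
      rw [Finset.sum_congr rfl hone, Finset.sum_const, nsmul_eq_mul, mul_one]
    rw [e1, e2, e3]
  have hSc : ∑ w ∈ R, c w = cc1 + cc2 + ∑ w ∈ Rc, c0 w := by
    rw [hRsplit c]
    have e1 : c w1 = cc1 := by simp [hc]
    have e2 : c w2 = cc2 := by simp [hc, hw21]
    have e3 : ∑ w ∈ Rc, c w = ∑ w ∈ Rc, c0 w :=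
      Finset.sum_congr rfl (fun w hw => by simp [hc, (hRcw w hw).1, (hRcw w hw).2])
    rw [e1, e2, e3]
  have hkey1 : e12 + e13 = b v1 + ∑ w ∈ R, a w := by
    rw [hSa, he12d, he13d, hγ1]; ring
  have hkey2 : e23 - e12 = b v2 + ∑ w ∈ R, c w := by
    rw [hSc, he23d, he12d, hγ2]; ring
  have hσsum : ∑ w ∈ R, σ w = 0 := inn_sum_rows R ord hordinj
  have hbS : b v1 + b v2 + b v3 + ∑ w ∈ R, b w = 0 := by
    rw [← hb0, ← Finset.add_sum_erase S b hv1, ← Finset.add_sum_erase (S.erase v1) b hv2,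
      ← Finset.add_sum_erase ((S.erase v1).erase v2) b hv3, ← hR]
    ring
  have hSd : ∑ w ∈ R, d w = ∑ w ∈ R, b w - ∑ w ∈ R, a w - ∑ w ∈ R, c w := by
    rw [hd]
    simp only [hβ]
    rw [Finset.sum_sub_distrib, Finset.sum_sub_distrib, Finset.sum_sub_distrib, hσsum]
    ring
  have hkey3 : e13 + e23 = - b v3 - ∑ w ∈ R, d w := by
    have : e13 + e23 = (b v1 + ∑ w ∈ R, a w) + (b v2 + ∑ w ∈ R, c w) := by
      rw [← hkey1, ← hkey2]; ring
    rw [this, hSd]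
    linear_combination hbS
  -- the flow
  set F : V → V → ZMod 3 := fun u v =>
    inn R ord u v + spk R v1 a u v + spk R v2 c u v + spk R v3 d u v +
      pr v1 v2 e12 u v + pr v1 v3 e13 u v + pr v2 v3 e23 u v with hF
  have hFanti : ∀ u v, F u v = - F v u := by
    intro u v
    rw [hF]
    simp only
    conv_lhs => rw [inn_anti R ord hordinj u v, spk_anti R v1 a u v, spk_anti R v2 c u v,
      spk_anti R v3 d u v, pr_anti v1 v2 e12 u v, pr_anti v1 v3 e13 u v, pr_anti v2 v3 e23 u v]
    ring
  have hFdiag : ∀ p, F p p = 0 := fun p => zmod3_double _ (by linear_combination hFanti p p)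
  have h12 : v1 ≠ v2 := fun h => h21 h.symm
  have h13 : v1 ≠ v3 := fun h => h31 h.symm
  have h23 : v2 ≠ v3 := fun h => h32 h.symm
  have hFzero : ∀ p q, p ∉ S → F p q = 0 := by
    intro p q hp
    have h1 : p ∉ R := fun h => hp (hRS h)
    have h2 : p ≠ v1 := fun h => hp (h ▸ hv1)
    have h3 : p ≠ v2 := fun h => hp (h ▸ hv2S)
    have h4 : p ≠ v3 := fun h => hp (h ▸ hv3S)
    simp [hF, inn, spk, pr, h1, h2, h3, h4]
  have hback : ∀ p q, p ∈ S → q ∈ S → p ≠ q → F p q ≠ 0 := by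
    intro p q hp hq hne
    simp only [hF]
    rcases (hmemS p).mp hp with h | h | h | h <;>
      rcases (hmemS q).mp hq with h' | h' | h' | h' <;>
      (try (exact absurd (h.trans h'.symm) hne)) <;> (try subst h) <;> (try subst h')
    · simpa [inn, spk, pr, hv1R, hv2R, hv3R, h12, h13, h23, h21, h31, h32] using he
    · simpa [inn, spk, pr, hv1R, hv2R, hv3R, h12, h13, h23, h21, h31, h32] using he13
    · obtain ⟨hq1, hq2, hq3⟩ := hwR q h'
      simpa [inn, spk, pr, hv1R, hv2R, hv3R, h12, h13, h23, h21, h31, h32, h', hq1, hq2, hq3]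
        using haz q
    · simpa [inn, spk, pr, hv1R, hv2R, hv3R, h12, h13, h23, h21, h31, h32] using he
    · simpa [inn, spk, pr, hv1R, hv2R, hv3R, h12, h13, h23, h21, h31, h32] using he23
    · obtain ⟨hq1, hq2, hq3⟩ := hwR q h'
      simpa [inn, spk, pr, hv1R, hv2R, hv3R, h12, h13, h23, h21, h31, h32, h', hq1, hq2, hq3]
        using hcz q
    · simpa [inn, spk, pr, hv1R, hv2R, hv3R, h12, h13, h23, h21, h31, h32] using he13
    · simpa [inn, spk, pr, hv1R, hv2R, hv3R, h12, h13, h23, h21, h31, h32] using he23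
    · obtain ⟨hq1, hq2, hq3⟩ := hwR q h'
      simpa [inn, spk, pr, hv1R, hv2R, hv3R, h12, h13, h23, h21, h31, h32, h', hq1, hq2, hq3]
        using hdz q
    · obtain ⟨hp1, hp2, hp3⟩ := hwR p h
      simpa [inn, spk, pr, hv1R, hv2R, hv3R, h12, h13, h23, h21, h31, h32, h, hp1, hp2, hp3]
        using haz p
    · obtain ⟨hp1, hp2, hp3⟩ := hwR p h
      simpa [inn, spk, pr, hv1R, hv2R, hv3R, h12, h13, h23, h21, h31, h32, h, hp1, hp2, hp3]
        using hcz p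
    · obtain ⟨hp1, hp2, hp3⟩ := hwR p h
      simpa [inn, spk, pr, hv1R, hv2R, hv3R, h12, h13, h23, h21, h31, h32, h, hp1, hp2, hp3]
        using hdz p
    · obtain ⟨hp1, hp2, hp3⟩ := hwR p h
      obtain ⟨hq1, hq2, hq3⟩ := hwR q h'
      simp [inn, spk, pr, h, h', hne, hp1, hp2, hp3, hq1, hq2, hq3]
      split_ifs <;> decide
  refine ⟨F, hFanti, ?_, ?_⟩
  · intro u v
    constructor
    · intro hnz
      by_contra hc
      apply hnz
      by_cases hu : u ∈ S
      · by_cases hv : v ∈ S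
        · have huv : u = v := by tauto
          rw [huv]; exact hFdiag v
        · rw [hFanti, hFzero v u hv, neg_zero]
      · exact hFzero u v hu
    · rintro ⟨hu, hv, hne⟩
      exact hback u v hu hv hne
  · -- row sums
    intro v
    have hrow : ∑ u, F v u = σ v +
        ((if v ∈ R then a v else 0) + (if v = v1 then -∑ w ∈ R, a w else 0)) +
        ((if v ∈ R then c v else 0) + (if v = v2 then -∑ w ∈ R, c w else 0)) +
        ((if v ∈ R then d v else 0) + (if v = v3 then -∑ w ∈ R, d w else 0)) +
        ((if v = v1 then e12 else 0) + (if v = v2 then -e12 else 0)) +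
        ((if v = v1 then e13 else 0) + (if v = v3 then -e13 else 0)) +
        ((if v = v2 then e23 else 0) + (if v = v3 then -e23 else 0)) := by
      rw [hF]
      simp only
      rw [Finset.sum_add_distrib, Finset.sum_add_distrib, Finset.sum_add_distrib,
        Finset.sum_add_distrib, Finset.sum_add_distrib, Finset.sum_add_distrib]
      rw [spk_row, spk_row, spk_row, pr_row, pr_row, pr_row, hσ]
    rw [hrow]
    have h12 : v1 ≠ v2 := fun h => h21 h.symm
    have h13 : v1 ≠ v3 := fun h => h31 h.symm
    have h23 : v2 ≠ v3 := fun h => h32 h.symm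
    by_cases hv : v ∈ S
    · rcases (hmemS v).mp hv with h | h | h | hvR
      · subst h
        have hσ0 : σ v = 0 := inn_row_not_mem R ord v hv1R
        rw [hσ0]
        simp only [if_true, eq_self_iff_true, if_pos rfl, if_neg hv1R, if_neg h12, if_neg h13]
        linear_combination hkey1
      · subst h
        have hσ0 : σ v = 0 := inn_row_not_mem R ord v hv2R
        rw [hσ0]
        simp only [if_true, eq_self_iff_true, if_pos rfl, if_neg hv2R, if_neg h21, if_neg h23]
        linear_combination hkey2
      · subst h
        have hσ0 : σ v = 0 := inn_row_not_mem R ord v hv3R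
        rw [hσ0]
        simp only [if_true, eq_self_iff_true, if_pos rfl, if_neg hv3R, if_neg h31, if_neg h32]
        linear_combination -hkey3
      · obtain ⟨hne1, hne2, hne3⟩ := hwR v hvR
        simp only [if_pos hvR, if_neg hne1, if_neg hne2, if_neg hne3]
        simp only [hd, hβ]
        ring
    · have hvR : v ∉ R := fun h => hv (hRS h)
      have hne1 : v ≠ v1 := fun h => hv (h ▸ hv1)
      have hne2 : v ≠ v2 := fun h => hv (h ▸ hv2S)
      have hne3 : v ≠ v3 := fun h => hv (h ▸ hv3S)
      have hσ0 : σ v = 0 := inn_row_not_mem R ord v hvR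
      rw [hσ0, hbz v hv]
      simp [hvR, hne1, hne2, hne3]

end StmtAux17

open StmtAux17 in
theorem stmt_17 {V : Type} [Fintype V] [DecidableEq V] (G : SimpleGraph V)
    [DecidableRel G.Adj]
    (halpha : ∀ a b c : V, a ≠ b → b ≠ c → a ≠ c → G.Adj a b ∨ G.Adj b c ∨ G.Adj a c)
    (hdeg : ∀ v : V, 4 ≤ G.degree v)
    (x y : V) (hxy : x ≠ y) (hnadj : ¬ G.Adj x y)
    (hcommon : G.neighborSet x ∩ G.neighborSet y = ∅)
    (h3ec : G.ThreeEdgeConnected) :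
    G.AConnected (ZMod 3) := by
  intro b hb0
  classical
  set A : Finset V := G.neighborFinset x with hA
  set B : Finset V := G.neighborFinset y with hB
  set A' : Finset V := insert x A with hA'
  set B' : Finset V := insert y B with hB'
  have hmemA : ∀ v, v ∈ A ↔ G.Adj x v := fun v => G.mem_neighborFinset x v
  have hmemB : ∀ v, v ∈ B ↔ G.Adj y v := fun v => G.mem_neighborFinset y v
  have hnAB : ∀ v, v ∈ A → v ∈ B → False := by
    intro v h1 h2
    exact Set.eq_empty_iff_forall_notMem.mp hcommon v ⟨(hmemA v).mp h1, (hmemB v).mp h2⟩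
  have hxA : x ∉ A := fun h => G.irrefl ((hmemA x).mp h)
  have hyB : y ∉ B := fun h => G.irrefl ((hmemB y).mp h)
  have hxB : x ∉ B := fun h => hnadj (((hmemB x).mp h).symm)
  have hyA : y ∉ A := fun h => hnadj ((hmemA y).mp h)
  have hxB' : x ∉ B' := by
    rw [hB']
    intro h
    rcases Finset.mem_insert.mp h with h | h
    · exact hxy h
    · exact hxB h
  have hyA' : y ∉ A' := by
    rw [hA']
    intro h
    rcases Finset.mem_insert.mp h with h | h
    · exact hxy h.symm
    · exact hyA h
  have hdisj : ∀ v, v ∈ A' → v ∈ B' → False := by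
    intro v h1 h2
    rcases Finset.mem_insert.mp h1 with rfl | h1'
    · exact hxB' h2
    rcases Finset.mem_insert.mp h2 with rfl | h2'
    · exact hyA h1'
    exact hnAB v h1' h2'
  have huniv : ∀ v, v ∈ A' ∨ v ∈ B' := by
    intro v
    by_cases h1 : v = x
    · left; rw [hA', h1]; exact Finset.mem_insert_self x A
    by_cases h2 : v = y
    · right; rw [hB', h2]; exact Finset.mem_insert_self y B
    rcases halpha x v y (fun h => h1 h.symm) h2 hxy with h | h | h
    · left; exact Finset.mem_insert_of_mem ((hmemA v).mpr h)
    · right; exact Finset.mem_insert_of_mem ((hmemB v).mpr (G.adj_symm h))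
    · exact absurd h hnadj
  have hcliqueA : ∀ u v, u ∈ A' → v ∈ A' → u ≠ v → G.Adj u v := by
    intro u v hu hv hne
    rcases Finset.mem_insert.mp hu with rfl | hu' <;> rcases Finset.mem_insert.mp hv with rfl | hv'
    · exact absurd rfl hne
    · exact (hmemA v).mp hv'
    · exact G.adj_symm ((hmemA u).mp hu')
    · have huy : u ≠ y := fun h => hyA (h ▸ hu')
      have hvy : v ≠ y := fun h => hyA (h ▸ hv')
      rcases halpha u y v huy (fun h => hvy h.symm) hne with h | h | h
      · exact absurd ((hmemB u).mpr (G.adj_symm h)) (fun hc => hnAB u hu' hc)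
      · exact absurd ((hmemB v).mpr h) (fun hc => hnAB v hv' hc)
      · exact h
  have hcliqueB : ∀ u v, u ∈ B' → v ∈ B' → u ≠ v → G.Adj u v := by
    intro u v hu hv hne
    rcases Finset.mem_insert.mp hu with rfl | hu' <;> rcases Finset.mem_insert.mp hv with rfl | hv'
    · exact absurd rfl hne
    · exact (hmemB v).mp hv'
    · exact G.adj_symm ((hmemB u).mp hu')
    · have hux : u ≠ x := fun h => hxB (h ▸ hu')
      have hvx : v ≠ x := fun h => hxB (h ▸ hv')
      rcases halpha u x v hux (fun h => hvx h.symm) hne with h | h | h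
      · exact absurd ((hmemA u).mpr (G.adj_symm h)) (fun hc => hnAB u hc hu')
      · exact absurd ((hmemA v).mpr h) (fun hc => hnAB v hc hv')
      · exact h
  have hcardA : 5 ≤ A'.card := by
    rw [hA', Finset.card_insert_of_notMem hxA]
    have : A.card = G.degree x := G.card_neighborFinset_eq_degree x
    have := hdeg x
    omega
  have hcardB : 5 ≤ B'.card := by
    rw [hB', Finset.card_insert_of_notMem hyB]
    have : B.card = G.degree y := G.card_neighborFinset_eq_degree y
    have := hdeg y
    omega
  set C : Finset (V × V) := (A ×ˢ B).filter (fun p => G.Adj p.1 p.2) with hC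
  have hCmem : ∀ p : V × V, p ∈ C ↔ p.1 ∈ A ∧ p.2 ∈ B ∧ G.Adj p.1 p.2 := by
    intro p
    rw [hC, Finset.mem_filter, Finset.mem_product]
    tauto
  have hC3 : 3 ≤ C.card := by
    have h1 := h3ec A' ⟨x, Finset.mem_insert_self x A⟩
      (fun h => hyA' (h ▸ Finset.mem_univ y))
    have h2 : (A' ×ˢ A'ᶜ).filter (fun p => G.Adj p.1 p.2) = C := by
      ext p
      rw [Finset.mem_filter, Finset.mem_product, Finset.mem_compl, hCmem]
      constructor
      · rintro ⟨⟨hp1, hp2⟩, hadj⟩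
        have hp2B' : p.2 ∈ B' := (huniv p.2).resolve_left hp2
        have hp1A : p.1 ∈ A := by
          rcases Finset.mem_insert.mp hp1 with h | h
          · exact absurd (Finset.mem_insert_of_mem ((hmemA p.2).mpr (h ▸ hadj)))
              (fun hc => hdisj p.2 hc hp2B')
          · exact h
        have hp2B : p.2 ∈ B := by
          rcases Finset.mem_insert.mp hp2B' with h | h
          · exact absurd ((hmemB p.1).mpr (G.adj_symm (h ▸ hadj))) (fun hc => hnAB p.1 hp1A hc)
          · exact h
        exact ⟨hp1A, hp2B, hadj⟩
      · rintro ⟨hp1, hp2, hadj⟩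
        exact ⟨⟨Finset.mem_insert_of_mem hp1,
          fun hc => hdisj p.2 hc (Finset.mem_insert_of_mem hp2)⟩, hadj⟩
    rw [h2] at h1
    exact h1
  set s : ZMod 3 := ∑ v ∈ A', b v with hs
  set dn : ℕ := (s - (C.card : ZMod 3)).val with hdn
  have hdn3 : dn ≤ C.card := by
    have := ZMod.val_lt (s - (C.card : ZMod 3))
    omega
  obtain ⟨D, hDC, hDcard⟩ := Finset.exists_subset_card_eq hdn3
  set t : V × V → ZMod 3 := fun e => if e ∈ D then 2 else 1 with ht
  have htnz : ∀ e, t e ≠ 0 := by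
    intro e; rw [ht]; simp only; split_ifs <;> decide
  have hT : ∑ e ∈ C, t e = s := by
    have h1 : ∑ e ∈ C, t e = (C.card : ZMod 3) + (D.card : ZMod 3) := by
      rw [ht]
      have : ∀ e ∈ C, (if e ∈ D then (2 : ZMod 3) else 1) = 1 + (if e ∈ D then 1 else 0) := by
        intro e _; split_ifs <;> ring
      rw [Finset.sum_congr rfl this, Finset.sum_add_distrib, Finset.sum_const,
        Finset.sum_ite_mem, Finset.inter_eq_right.mpr hDC, Finset.sum_const]
      simp [mul_one]
    rw [h1, hDcard, hdn]
    have h2 : (((s - (C.card : ZMod 3)).val : ℕ) : ZMod 3) = s - (C.card : ZMod 3) := by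
      simp [ZMod.natCast_val, ZMod.cast_id]
    rw [h2]
    ring
  set fC : V → V → ZMod 3 := fun u v =>
    (if (u, v) ∈ C then t (u, v) else 0) - (if (v, u) ∈ C then t (v, u) else 0) with hfC
  have hfCanti : ∀ u v, fC u v = - fC v u := by
    intro u v; rw [hfC]; ring
  set ρ : V → ZMod 3 := fun v => ∑ u, fC v u with hρ
  have hρsplit : ∀ v, ρ v = (∑ u, if (v, u) ∈ C then t (v, u) else 0) -
      (∑ u, if (u, v) ∈ C then t (u, v) else 0) := by
    intro v
    rw [hρ]
    simp only [hfC]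
    rw [Finset.sum_sub_distrib]
  have hQA : ∀ v ∈ A', (∑ u, if (u, v) ∈ C then t (u, v) else 0) = 0 := by
    intro v hv
    apply Finset.sum_eq_zero
    intro u _
    rw [if_neg]
    intro hc
    exact hdisj v hv (Finset.mem_insert_of_mem ((hCmem _).mp hc).2.1)
  have hPB : ∀ v ∈ B', (∑ u, if (v, u) ∈ C then t (v, u) else 0) = 0 := by
    intro v hv
    apply Finset.sum_eq_zero
    intro u _
    rw [if_neg]
    intro hc
    exact hdisj v (Finset.mem_insert_of_mem ((hCmem _).mp hc).1) hv
  have hPA : ∑ v ∈ A', (∑ u, if (v, u) ∈ C then t (v, u) else 0) = ∑ e ∈ C, t e := by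
    rw [← Finset.sum_product (s := A') (t := Finset.univ)
      (f := fun p => if p ∈ C then t p else 0)]
    rw [Finset.sum_ite_mem]
    congr 1
    apply Finset.inter_eq_right.mpr
    intro p hp
    exact Finset.mem_product.mpr ⟨Finset.mem_insert_of_mem ((hCmem p).mp hp).1, Finset.mem_univ _⟩
  have hQB : ∑ v ∈ B', (∑ u, if (u, v) ∈ C then t (u, v) else 0) = ∑ e ∈ C, t e := by
    rw [← Finset.sum_product_right (s := Finset.univ) (t := B')
      (f := fun p => if p ∈ C then t p else 0)]
    rw [Finset.sum_ite_mem]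
    congr 1
    apply Finset.inter_eq_right.mpr
    intro p hp
    exact Finset.mem_product.mpr ⟨Finset.mem_univ _,
      Finset.mem_insert_of_mem ((hCmem p).mp hp).2.1⟩
  have hρA : ∑ v ∈ A', ρ v = s := by
    have h1 : ∀ v ∈ A', ρ v = ∑ u, if (v, u) ∈ C then t (v, u) else 0 := by
      intro v hv
      rw [hρsplit v, hQA v hv, sub_zero]
    rw [Finset.sum_congr rfl h1, hPA, hT]
  have hρB : ∑ v ∈ B', ρ v = -s := by
    have h1 : ∀ v ∈ B', ρ v = -(∑ u, if (u, v) ∈ C then t (u, v) else 0) := by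
      intro v hv
      rw [hρsplit v, hPB v hv, zero_sub]
    rw [Finset.sum_congr rfl h1, Finset.sum_neg_distrib, hQB, hT]
  have hdisj' : Disjoint A' B' := Finset.disjoint_left.mpr (fun {a} h1 h2 => hdisj a h1 h2)
  have huz : A' ∪ B' = Finset.univ := by
    ext v
    simp only [Finset.mem_union, Finset.mem_univ, iff_true]
    exact huniv v
  have hbB' : ∑ v ∈ B', b v = -s := by
    have h1 : ∑ v ∈ A' ∪ B', b v = ∑ v ∈ A', b v + ∑ v ∈ B', b v := Finset.sum_union hdisj'
    rw [huz, hb0] at h1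
    rw [hs]
    linear_combination -h1
  set b' : V → ZMod 3 := fun v => b v - ρ v with hb'
  set bA : V → ZMod 3 := fun v => if v ∈ A' then b' v else 0 with hbA
  set bB : V → ZMod 3 := fun v => if v ∈ B' then b' v else 0 with hbB
  have hbA0 : ∑ v ∈ A', bA v = 0 := by
    have h1 : ∀ v ∈ A', bA v = b v - ρ v := by
      intro v hv
      simp [hbA, hv, hb']
    rw [Finset.sum_congr rfl h1, Finset.sum_sub_distrib, hρA, ← hs]
    ring
  have hbB0 : ∑ v ∈ B', bB v = 0 := by
    have h1 : ∀ v ∈ B', bB v = b v - ρ v := by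
      intro v hv
      simp [hbB, hv, hb']
    rw [Finset.sum_congr rfl h1, Finset.sum_sub_distrib, hρB, hbB']
    ring
  obtain ⟨fA, hfAanti, hfAsupp, hfArow⟩ := clique_flow A' hcardA bA hbA0
    (fun v hv => by simp [hbA, hv])
  obtain ⟨fB, hfBanti, hfBsupp, hfBrow⟩ := clique_flow B' hcardB bB hbB0
    (fun v hv => by simp [hbB, hv])
  refine ⟨fun u v => fA u v + fB u v + fC u v, ?_, ?_, ?_⟩
  · intro u v
    show fA u v + fB u v + fC u v = -(fA v u + fB v u + fC v u)
    rw [hfAanti u v, hfBanti u v, hfCanti u v]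
    ring
  · intro u v
    show G.Adj u v ↔ fA u v + fB u v + fC u v ≠ 0
    rcases huniv u with hu | hu <;> rcases huniv v with hv | hv
    · -- both in A'
      have h1 : fB u v = 0 := by
        by_contra hc
        exact hdisj u hu ((hfBsupp u v).mp hc).1
      have h2 : fC u v = 0 := by
        rw [hfC]
        simp only
        rw [if_neg (fun hc => hdisj v hv (Finset.mem_insert_of_mem ((hCmem _).mp hc).2.1)),
          if_neg (fun hc => hdisj u hu (Finset.mem_insert_of_mem ((hCmem _).mp hc).2.1))]
        ring
      rw [h1, h2, add_zero, add_zero]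
      rw [hfAsupp u v]
      constructor
      · intro h; exact ⟨hu, hv, G.ne_of_adj h⟩
      · rintro ⟨_, _, hne⟩; exact hcliqueA u v hu hv hne
    · -- u ∈ A', v ∈ B'
      have h1 : fA u v = 0 := by
        by_contra hc
        exact hdisj v ((hfAsupp u v).mp hc).2.1 hv
      have h2 : fB u v = 0 := by
        by_contra hc
        exact hdisj u hu ((hfBsupp u v).mp hc).1
      have h3 : (v, u) ∉ C := fun hc => hdisj v (Finset.mem_insert_of_mem ((hCmem _).mp hc).1) hv
      have hCiff : G.Adj u v ↔ (u, v) ∈ C := by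
        rw [hCmem]
        constructor
        · intro hadj
          have huA : u ∈ A := by
            rcases Finset.mem_insert.mp hu with h | h
            · exact absurd (Finset.mem_insert_of_mem ((hmemA v).mpr (h ▸ hadj)))
                (fun hc => hdisj v hc hv)
            · exact h
          have hvB : v ∈ B := by
            rcases Finset.mem_insert.mp hv with h | h
            · exact absurd ((hmemB u).mpr (G.adj_symm (h ▸ hadj))) (fun hc => hnAB u huA hc)
            · exact h
          exact ⟨huA, hvB, hadj⟩
        · rintro ⟨_, _, hadj⟩; exact hadj
      rw [h1, h2, zero_add, zero_add, hfC]
      simp only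
      rw [if_neg h3, sub_zero]
      rw [hCiff]
      by_cases hm : (u, v) ∈ C
      · simp [hm, htnz]
      · simp [hm]
    · -- u ∈ B', v ∈ A'
      have h1 : fA u v = 0 := by
        by_contra hc
        exact hdisj u ((hfAsupp u v).mp hc).1 hu
      have h2 : fB u v = 0 := by
        by_contra hc
        exact hdisj v hv ((hfBsupp u v).mp hc).2.1
      have h3 : (u, v) ∉ C := fun hc => hdisj u (Finset.mem_insert_of_mem ((hCmem _).mp hc).1) hu
      have hCiff : G.Adj u v ↔ (v, u) ∈ C := by
        rw [hCmem]
        constructor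
        · intro hadj
          have hvA : v ∈ A := by
            rcases Finset.mem_insert.mp hv with h | h
            · exact absurd (Finset.mem_insert_of_mem ((hmemA u).mpr (G.adj_symm (h ▸ hadj))))
                (fun hc => hdisj u hc hu)
            · exact h
          have huB : u ∈ B := by
            rcases Finset.mem_insert.mp hu with h | h
            · exact absurd ((hmemB v).mpr (h ▸ hadj)) (fun hc => hnAB v hvA hc)
            · exact h
          exact ⟨hvA, huB, G.adj_symm hadj⟩
        · rintro ⟨_, _, hadj⟩; exact G.adj_symm hadj
      rw [h1, h2, zero_add, zero_add, hfC]
      simp only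
      rw [if_neg h3, zero_sub, neg_ne_zero]
      rw [hCiff]
      by_cases hm : (v, u) ∈ C
      · simp [hm, htnz]
      · simp [hm]
    · -- both in B'
      have h1 : fA u v = 0 := by
        by_contra hc
        exact hdisj u ((hfAsupp u v).mp hc).1 hu
      have h2 : fC u v = 0 := by
        rw [hfC]
        simp only
        rw [if_neg (fun hc => hdisj u (Finset.mem_insert_of_mem ((hCmem _).mp hc).1) hu),
          if_neg (fun hc => hdisj v (Finset.mem_insert_of_mem ((hCmem _).mp hc).1) hv)]
        ring
      rw [h1, h2, zero_add, add_zero]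
      rw [hfBsupp u v]
      constructor
      · intro h; exact ⟨hu, hv, G.ne_of_adj h⟩
      · rintro ⟨_, _, hne⟩; exact hcliqueB u v hu hv hne
  · intro v
    show (∑ u, (fA v u + fB v u + fC v u)) = b v
    have hr : ∑ u, (fA v u + fB v u + fC v u) = bA v + bB v + ρ v := by
      rw [Finset.sum_add_distrib, Finset.sum_add_distrib, hfArow, hfBrow]
    rw [hr]
    rcases huniv v with hv | hv
    · have h2 : bB v = 0 := by
        rw [hbB]; simp only; rw [if_neg (fun hc => hdisj v hv hc)]
      rw [h2, hbA]
      simp only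
      rw [if_pos hv, hb']
      ring
    · have h2 : bA v = 0 := by
        rw [hbA]; simp only; rw [if_neg (fun hc => hdisj v hc hv)]
      rw [h2, hbB]
      simp only
      rw [if_pos hv, hb']
      ring
end
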